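/- arXiv:1610.00551 — 5 statements merged into one kernel-verified Lean document; each statement's English description precedes it below -/
import Mathlib

section
/- Let (C, A, φ) be a monoidal entwining datum over k, with C and A finite-dimensional Hopf algebras with bijective antipodes, and let M be an entwined module with dual entwined module M* (A-action (f·a)(m) = f(m·S_A^{-1}(a)), C-coaction Σ f₀(m) ⊗ f₁ = Σ f(m₀) ⊗ S_C(m₁)). Then the evaluation map ev_M: M* ⊗ M → k, f ⊗ m ↦ f(m), and the coevaluation map coev_M: k → M ⊗ M*, 1 ↦ Σᵢ eᵢ ⊗ eⁱ (for dual bases eᵢ of M and eⁱ of M*), are both right A-linear and right C-colinear, where M* ⊗ M and M ⊗ M* carry the tensor product entwined module structure (x ⊗ y)·a = x·a₁ ⊗ y·a₂ and coaction (x ⊗ y) ↦ Σ x₀ ⊗ y₀ ⊗ x₁y₁, and k carries the trivial structure λ·a = λε_A(a), λ ↦ λ ⊗ 1_C. -/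
set_option maxHeartbeats 1000000
set_option synthInstance.maxHeartbeats 400000


open TensorProduct LinearMap Coalgebra

noncomputable section

namespace Paper

variable (k : Type*) [Field k]

section EntwiningMap

variable (C A : Type*) [AddCommGroup C] [Module k C] [Coalgebra k C] [Ring A] [Algebra k A]

/-- (E1): `φ(c ⊗ ab) = Σ a_φ b_ψ ⊗ c^{φψ}`. -/
def E1 (φ : C ⊗[k] A →ₗ[k] A ⊗[k] C) : Prop :=
  φ ∘ₗ lTensor C (mul' k A) =
    rTensor C (mul' k A) ∘ₗ (TensorProduct.assoc k A A C).symm.toLinearMap ∘ₗ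
      lTensor A φ ∘ₗ (TensorProduct.assoc k A C A).toLinearMap ∘ₗ
      rTensor A φ ∘ₗ (TensorProduct.assoc k C A A).symm.toLinearMap

/-- (E2): `Σ a_φ ⊗ Δ(c^φ) = Σ a_{φψ} ⊗ c₁^ψ ⊗ c₂^φ`. -/
def E2 (φ : C ⊗[k] A →ₗ[k] A ⊗[k] C) : Prop :=
  lTensor A (comul (R := k) (A := C)) ∘ₗ φ =
    (TensorProduct.assoc k A C C).toLinearMap ∘ₗ rTensor C φ ∘ₗ
      (TensorProduct.assoc k C A C).symm.toLinearMap ∘ₗ lTensor C φ ∘ₗ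
      (TensorProduct.assoc k C C A).toLinearMap ∘ₗ rTensor A (comul (R := k) (A := C))

/-- (E3): `φ(c ⊗ 1) = 1 ⊗ c`. -/
def E3 (φ : C ⊗[k] A →ₗ[k] A ⊗[k] C) : Prop :=
  ∀ c : C, φ (c ⊗ₜ[k] (1 : A)) = (1 : A) ⊗ₜ[k] c

/-- (E4): `Σ a_φ ε(c^φ) = a ε(c)`. -/
def E4 (φ : C ⊗[k] A →ₗ[k] A ⊗[k] C) : Prop :=
  (TensorProduct.rid k A).toLinearMap ∘ₗ lTensor A (counit (R := k) (A := C)) ∘ₗ φ =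
    (TensorProduct.lid k A).toLinearMap ∘ₗ rTensor A (counit (R := k) (A := C))

/-- `(C, A, φ)` is an entwining structure. -/
def IsEntwining (φ : C ⊗[k] A →ₗ[k] A ⊗[k] C) : Prop :=
  E1 k C A φ ∧ E2 k C A φ ∧ E3 k C A φ ∧ E4 k C A φ

variable (M : Type*) [AddCommGroup M] [Module k M]

/-- `(M, act, ρ)` is an entwined module over the entwining structure `(C, A, φ)`:
a right `A`-module, a coassociative counital right `C`-comodule, with the
compatibility `ρ(m·a) = Σ m₀·a_φ ⊗ m₁^φ`. -/
def IsEntwinedModule (φ : C ⊗[k] A →ₗ[k] A ⊗[k] C)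
    (act : M ⊗[k] A →ₗ[k] M) (ρ : M →ₗ[k] M ⊗[k] C) : Prop :=
  (∀ m : M, act (m ⊗ₜ[k] (1 : A)) = m) ∧
  (act ∘ₗ rTensor A act =
    act ∘ₗ lTensor M (mul' k A) ∘ₗ (TensorProduct.assoc k M A A).toLinearMap) ∧
  (rTensor C ρ ∘ₗ ρ =
    (TensorProduct.assoc k M C C).symm.toLinearMap ∘ₗ lTensor M (comul (R := k) (A := C)) ∘ₗ ρ) ∧
  ((TensorProduct.rid k M).toLinearMap ∘ₗ lTensor M (counit (R := k) (A := C)) ∘ₗ ρ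
      = LinearMap.id) ∧
  (ρ ∘ₗ act =
    rTensor C act ∘ₗ (TensorProduct.assoc k M A C).symm.toLinearMap ∘ₗ
      lTensor M φ ∘ₗ (TensorProduct.assoc k M C A).toLinearMap ∘ₗ rTensor A ρ)

end EntwiningMap

section Monoidal

variable (C A : Type*) [Ring C] [Ring A] [Bialgebra k C] [Bialgebra k A]

/-- (E5): `Σ Δ(a_φ) ⊗ (cd)^φ = Σ (a₁)_φ ⊗ (a₂)_ψ ⊗ c^φ d^ψ`. -/
def E5 (φ : C ⊗[k] A →ₗ[k] A ⊗[k] C) : Prop :=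
  rTensor C (comul (R := k) (A := A)) ∘ₗ φ ∘ₗ rTensor A (mul' k C) =
    lTensor (A ⊗[k] A) (mul' k C) ∘ₗ
      (tensorTensorTensorComm k A C A C).toLinearMap ∘ₗ
      TensorProduct.map φ φ ∘ₗ
      (tensorTensorTensorComm k C C A A).toLinearMap ∘ₗ
      lTensor (C ⊗[k] C) (comul (R := k) (A := A))

/-- (E6): `Σ ε(a_φ) (1_C)^φ = ε(a) 1_C`. -/
def E6 (φ : C ⊗[k] A →ₗ[k] A ⊗[k] C) : Prop :=
  ∀ a : A, (TensorProduct.lid k C)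
      (rTensor C (counit (R := k) (A := A)) (φ ((1 : C) ⊗ₜ[k] a)))
    = counit (R := k) (A := A) a • (1 : C)

/-- `(C, A, φ)` is a monoidal entwining datum. -/
def IsMonoidalEntwining (φ : C ⊗[k] A →ₗ[k] A ⊗[k] C) : Prop :=
  IsEntwining k C A φ ∧ E5 k C A φ ∧ E6 k C A φ

end Monoidal

end Paper

namespace Paper

section TensorStr

variable (k : Type*) [Field k]
variable {C A : Type*} [Ring C] [Ring A] [Bialgebra k C] [Bialgebra k A]

/-- The tensor product `A`-action `(x ⊗ y)·a = x·a₁ ⊗ y·a₂`. -/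
def tensorAct (X Y : Type*) [AddCommGroup X] [Module k X] [AddCommGroup Y] [Module k Y]
    (actX : X ⊗[k] A →ₗ[k] X) (actY : Y ⊗[k] A →ₗ[k] Y) :
    (X ⊗[k] Y) ⊗[k] A →ₗ[k] X ⊗[k] Y :=
  TensorProduct.map actX actY ∘ₗ (tensorTensorTensorComm k X Y A A).toLinearMap ∘ₗ
    lTensor (X ⊗[k] Y) (comul (R := k) (A := A))

/-- The tensor product `C`-coaction `(x ⊗ y) ↦ Σ x₀ ⊗ y₀ ⊗ x₁y₁`. -/
def tensorCoact (X Y : Type*) [AddCommGroup X] [Module k X] [AddCommGroup Y] [Module k Y]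
    (ρX : X →ₗ[k] X ⊗[k] C) (ρY : Y →ₗ[k] Y ⊗[k] C) :
    X ⊗[k] Y →ₗ[k] (X ⊗[k] Y) ⊗[k] C :=
  lTensor (X ⊗[k] Y) (mul' k C) ∘ₗ (tensorTensorTensorComm k X C Y C).toLinearMap ∘ₗ
    TensorProduct.map ρX ρY

/-- The trivial `A`-action on `k`: `λ·a = λ ε_A(a)`. -/
def trivAct : k ⊗[k] A →ₗ[k] k :=
  counit (R := k) (A := A) ∘ₗ (TensorProduct.lid k A).toLinearMap

/-- The trivial `C`-coaction on `k`: `λ ↦ λ ⊗ 1_C`. -/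
def trivCoact : k →ₗ[k] k ⊗[k] C :=
  (TensorProduct.mk k k C).flip (1 : C)

end TensorStr

section AuxConv

variable {k : Type*} [Field k]
variable {V B : Type*} [AddCommGroup V] [Module k V] [Ring B] [Algebra k B]

/-- Convolution product relative to a comultiplication-like map `δ`. -/
def conv (δ : V →ₗ[k] V ⊗[k] V) (f g : V →ₗ[k] B) : V →ₗ[k] B :=
  mul' k B ∘ₗ TensorProduct.map f g ∘ₗ δ

theorem conv_apply (δ : V →ₗ[k] V ⊗[k] V) (f g : V →ₗ[k] B) (v : V) :
    conv δ f g v = mul' k B (TensorProduct.map f g (δ v)) := rfl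

theorem conv_assoc (δ : V →ₗ[k] V ⊗[k] V)
    (hδ : ∀ v : V, (TensorProduct.assoc k V V V) (rTensor V δ (δ v)) = lTensor V δ (δ v))
    (f g h : V →ₗ[k] B) :
    conv δ (conv δ f g) h = conv δ f (conv δ g h) := by
  have hl : ∀ w : V ⊗[k] V, TensorProduct.map (conv δ f g) h w
      = rTensor B (mul' k B) (TensorProduct.map (TensorProduct.map f g) h (rTensor V δ w)) := by
    intro w
    induction w using TensorProduct.induction_on with
    | zero => simp
    | tmul x y => simp [conv_apply]
    | add u v hu hv => simp [hu, hv]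
  have hr : ∀ w : V ⊗[k] V, TensorProduct.map f (conv δ g h) w
      = lTensor B (mul' k B) (TensorProduct.map f (TensorProduct.map g h) (lTensor V δ w)) := by
    intro w
    induction w using TensorProduct.induction_on with
    | zero => simp
    | tmul x y => simp [conv_apply]
    | add u v hu hv => simp [hu, hv]
  have key : mul' k B ∘ₗ rTensor B (mul' k B) ∘ₗ TensorProduct.map (TensorProduct.map f g) h
      = mul' k B ∘ₗ lTensor B (mul' k B) ∘ₗ TensorProduct.map f (TensorProduct.map g h)
        ∘ₗ (TensorProduct.assoc k V V V).toLinearMap := by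
    apply TensorProduct.ext_threefold
    intro x y z
    simp [mul_assoc]
  apply LinearMap.ext; intro v
  rw [conv_apply, conv_apply, hl (δ v), hr (δ v), ← hδ v]
  have := LinearMap.congr_fun key (rTensor V δ (δ v))
  simp only [LinearMap.comp_apply, LinearEquiv.coe_coe] at this
  exact this

theorem conv_unit_left (δ : V →ₗ[k] V ⊗[k] V) (ε' : V →ₗ[k] k)
    (hε : ∀ v : V, rTensor V ε' (δ v) = (1 : k) ⊗ₜ[k] v) (f : V →ₗ[k] B) :
    conv δ (Algebra.linearMap k B ∘ₗ ε') f = f := by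
  apply LinearMap.ext; intro v
  have hl : ∀ w : V ⊗[k] V, mul' k B (TensorProduct.map (Algebra.linearMap k B ∘ₗ ε') f w)
      = f ((TensorProduct.lid k V) (rTensor V ε' w)) := by
    intro w
    induction w using TensorProduct.induction_on with
    | zero => simp
    | tmul x y => simp [Algebra.smul_def]
    | add u v hu hv => simp [hu, hv]
  rw [conv_apply, hl, hε]; simp

theorem conv_unit_right (δ : V →ₗ[k] V ⊗[k] V) (ε' : V →ₗ[k] k)
    (hε : ∀ v : V, lTensor V ε' (δ v) = v ⊗ₜ[k] (1 : k)) (f : V →ₗ[k] B) :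
    conv δ f (Algebra.linearMap k B ∘ₗ ε') = f := by
  apply LinearMap.ext; intro v
  have hl : ∀ w : V ⊗[k] V, mul' k B (TensorProduct.map f (Algebra.linearMap k B ∘ₗ ε') w)
      = f ((TensorProduct.rid k V) (lTensor V ε' w)) := by
    intro w
    induction w using TensorProduct.induction_on with
    | zero => simp
    | tmul x y =>
      simp only [TensorProduct.map_tmul, LinearMap.comp_apply, LinearMap.mul'_apply,
        lTensor_tmul, TensorProduct.rid_tmul, map_smul]
      simp only [Algebra.linearMap_apply]
      rw [Algebra.smul_def]
      exact (Algebra.commutes (ε' y) (f x)).symm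
    | add u v hu hv => simp [hu, hv]
  rw [conv_apply, hl, hε]; simp

theorem conv_inv_unique (δ : V →ₗ[k] V ⊗[k] V) (ε' : V →ₗ[k] k)
    (hδ : ∀ v : V, (TensorProduct.assoc k V V V) (rTensor V δ (δ v)) = lTensor V δ (δ v))
    (hεl : ∀ v : V, rTensor V ε' (δ v) = (1 : k) ⊗ₜ[k] v)
    (hεr : ∀ v : V, lTensor V ε' (δ v) = v ⊗ₜ[k] (1 : k))
    {f g h : V →ₗ[k] B}
    (h1 : conv δ f h = Algebra.linearMap k B ∘ₗ ε')
    (h2 : conv δ h g = Algebra.linearMap k B ∘ₗ ε') : f = g := by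
  calc f = conv δ f (Algebra.linearMap k B ∘ₗ ε') := (conv_unit_right δ ε' hεr f).symm
  _ = conv δ f (conv δ h g) := by rw [h2]
  _ = conv δ (conv δ f h) g := (conv_assoc δ hδ f h g).symm
  _ = conv δ (Algebra.linearMap k B ∘ₗ ε') g := by rw [h1]
  _ = g := conv_unit_left δ ε' hεl g

end AuxConv

section AuxHopf

variable (k : Type*) [Field k]
variable (A : Type*) [Ring A] [Bialgebra k A]

/-- The comultiplication of the tensor-product coalgebra `A ⊗ A`. -/
def deltaT : A ⊗[k] A →ₗ[k] (A ⊗[k] A) ⊗[k] (A ⊗[k] A) :=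
  (tensorTensorTensorComm k A A A A).toLinearMap ∘ₗ
    TensorProduct.map (comul (R := k) (A := A)) (comul (R := k) (A := A))

/-- The counit of the tensor-product coalgebra `A ⊗ A`. -/
def epsT : A ⊗[k] A →ₗ[k] k :=
  mul' k k ∘ₗ TensorProduct.map (counit (R := k) (A := A)) (counit (R := k) (A := A))

variable {k A}

theorem deltaT_coassoc (v : A ⊗[k] A) :
    (TensorProduct.assoc k (A ⊗[k] A) (A ⊗[k] A) (A ⊗[k] A))
        (rTensor (A ⊗[k] A) (deltaT k A) (deltaT k A v))
      = lTensor (A ⊗[k] A) (deltaT k A) (deltaT k A v) := by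
  set Θ : (A ⊗[k] (A ⊗[k] A)) ⊗[k] (A ⊗[k] (A ⊗[k] A))
      →ₗ[k] (A ⊗[k] A) ⊗[k] ((A ⊗[k] A) ⊗[k] (A ⊗[k] A)) :=
    lTensor (A ⊗[k] A) (tensorTensorTensorComm k A A A A).toLinearMap
      ∘ₗ (tensorTensorTensorComm k A (A ⊗[k] A) A (A ⊗[k] A)).toLinearMap with hΘ
  set Ξ : ((A ⊗[k] A) ⊗[k] A) ⊗[k] ((A ⊗[k] A) ⊗[k] A)
      →ₗ[k] ((A ⊗[k] A) ⊗[k] (A ⊗[k] A)) ⊗[k] (A ⊗[k] A) :=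
    rTensor (A ⊗[k] A) (tensorTensorTensorComm k A A A A).toLinearMap
      ∘ₗ (tensorTensorTensorComm k (A ⊗[k] A) A (A ⊗[k] A) A).toLinearMap with hΞ
  have claimL1 : rTensor (A ⊗[k] A) (deltaT k A)
        ∘ₗ (tensorTensorTensorComm k A A A A).toLinearMap
      = Ξ ∘ₗ TensorProduct.map (rTensor A (comul (R := k))) (rTensor A (comul (R := k))) := by
    apply TensorProduct.ext_fourfold'
    intro x1 x2 y1 y2
    simp [deltaT, hΞ]
  have claimR : lTensor (A ⊗[k] A) (deltaT k A)
        ∘ₗ (tensorTensorTensorComm k A A A A).toLinearMap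
      = Θ ∘ₗ TensorProduct.map (lTensor A (comul (R := k))) (lTensor A (comul (R := k))) := by
    apply TensorProduct.ext_fourfold'
    intro x1 x2 y1 y2
    simp [deltaT, hΘ]
  have claimF : (TensorProduct.assoc k (A ⊗[k] A) (A ⊗[k] A) (A ⊗[k] A)).toLinearMap ∘ₗ Ξ
        ∘ₗ TensorProduct.map (TensorProduct.assoc k A A A).symm.toLinearMap
            (TensorProduct.assoc k A A A).symm.toLinearMap
      = Θ := by
    apply TensorProduct.ext_fourfold'
    intro x1 w y1 q
    induction w using TensorProduct.induction_on with
    | zero => simp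
    | tmul x2 x3 =>
      induction q using TensorProduct.induction_on with
      | zero => simp
      | tmul y2 y3 => simp [hΞ, hΘ]
      | add u1 u2 hu1 hu2 => simp only [TensorProduct.tmul_add, map_add, hu1, hu2]
    | add u1 u2 hu1 hu2 =>
      simp only [TensorProduct.tmul_add, TensorProduct.add_tmul, map_add, hu1, hu2]
  have hco : rTensor A (comul (R := k) (A := A)) ∘ₗ comul
      = (TensorProduct.assoc k A A A).symm.toLinearMap ∘ₗ (lTensor A comul ∘ₗ comul) := by
    apply LinearMap.ext; intro a
    simpa using (Coalgebra.coassoc_symm_apply a).symm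
  have s1 : TensorProduct.map (rTensor A (comul (R := k))) (rTensor A (comul (R := k)))
        ∘ₗ TensorProduct.map (comul (R := k) (A := A)) comul
      = TensorProduct.map (TensorProduct.assoc k A A A).symm.toLinearMap
          (TensorProduct.assoc k A A A).symm.toLinearMap
        ∘ₗ (TensorProduct.map (lTensor A (comul (R := k))) (lTensor A (comul (R := k)))
        ∘ₗ TensorProduct.map (comul (R := k) (A := A)) comul) := by
    simp only [← TensorProduct.map_comp]
    rw [hco]
  have e0 : deltaT k A v
      = (tensorTensorTensorComm k A A A A) (TensorProduct.map comul comul v) := rfl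
  rw [e0]
  have e1 := LinearMap.congr_fun claimL1 (TensorProduct.map comul comul v)
  simp only [LinearMap.comp_apply, LinearEquiv.coe_coe] at e1
  rw [e1]
  have e2 := LinearMap.congr_fun s1 v
  simp only [LinearMap.comp_apply, LinearEquiv.coe_coe] at e2
  rw [e2]
  have e3 := LinearMap.congr_fun claimF
    ((TensorProduct.map (lTensor A (comul (R := k))) (lTensor A (comul (R := k))))
      (TensorProduct.map comul comul v))
  simp only [LinearMap.comp_apply, LinearEquiv.coe_coe] at e3
  rw [e3]
  have e4 := LinearMap.congr_fun claimR (TensorProduct.map comul comul v)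
  simp only [LinearMap.comp_apply, LinearEquiv.coe_coe] at e4
  rw [← e4]

theorem deltaT_counit_left (v : A ⊗[k] A) :
    rTensor (A ⊗[k] A) (epsT k A) (deltaT k A v) = (1 : k) ⊗ₜ[k] v := by
  set κ : (k ⊗[k] A) ⊗[k] (k ⊗[k] A) →ₗ[k] k ⊗[k] (A ⊗[k] A) :=
    TensorProduct.map (mul' k k) LinearMap.id
      ∘ₗ (tensorTensorTensorComm k k A k A).toLinearMap with hκ
  have claim1 : rTensor (A ⊗[k] A) (epsT k A) ∘ₗ (tensorTensorTensorComm k A A A A).toLinearMap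
      = κ ∘ₗ TensorProduct.map (rTensor A (counit (R := k))) (rTensor A (counit (R := k))) := by
    apply TensorProduct.ext_fourfold'
    intro x1 x2 y1 y2
    simp [epsT, hκ]
  have claim2 : TensorProduct.map (rTensor A (counit (R := k))) (rTensor A (counit (R := k)))
        ∘ₗ TensorProduct.map (comul (R := k) (A := A)) comul
      = TensorProduct.map ((TensorProduct.mk k k A) 1) ((TensorProduct.mk k k A) 1) := by
    simp only [← TensorProduct.map_comp]
    rw [Coalgebra.rTensor_counit_comp_comul]
  have claim3 : κ ∘ₗ TensorProduct.map ((TensorProduct.mk k k A) 1) ((TensorProduct.mk k k A) 1)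
      = (TensorProduct.mk k k (A ⊗[k] A)) 1 := by
    apply TensorProduct.ext'
    intro x y
    simp [hκ]
  have e0 : deltaT k A v
      = (tensorTensorTensorComm k A A A A) (TensorProduct.map comul comul v) := rfl
  rw [e0]
  have e1 := LinearMap.congr_fun claim1 (TensorProduct.map comul comul v)
  simp only [LinearMap.comp_apply, LinearEquiv.coe_coe] at e1
  rw [e1]
  have e2 := LinearMap.congr_fun claim2 v
  simp only [LinearMap.comp_apply] at e2
  rw [e2]
  exact LinearMap.congr_fun claim3 v

theorem deltaT_counit_right (v : A ⊗[k] A) :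
    lTensor (A ⊗[k] A) (epsT k A) (deltaT k A v) = v ⊗ₜ[k] (1 : k) := by
  set κ : (A ⊗[k] k) ⊗[k] (A ⊗[k] k) →ₗ[k] (A ⊗[k] A) ⊗[k] k :=
    TensorProduct.map LinearMap.id (mul' k k)
      ∘ₗ (tensorTensorTensorComm k A k A k).toLinearMap with hκ
  have claim1 : lTensor (A ⊗[k] A) (epsT k A) ∘ₗ (tensorTensorTensorComm k A A A A).toLinearMap
      = κ ∘ₗ TensorProduct.map (lTensor A (counit (R := k))) (lTensor A (counit (R := k))) := by
    apply TensorProduct.ext_fourfold'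
    intro x1 x2 y1 y2
    simp [epsT, hκ]
  have claim2 : TensorProduct.map (lTensor A (counit (R := k))) (lTensor A (counit (R := k)))
        ∘ₗ TensorProduct.map (comul (R := k) (A := A)) comul
      = TensorProduct.map ((TensorProduct.mk k A k).flip 1) ((TensorProduct.mk k A k).flip 1) := by
    simp only [← TensorProduct.map_comp]
    rw [Coalgebra.lTensor_counit_comp_comul]
  have claim3 : κ ∘ₗ TensorProduct.map ((TensorProduct.mk k A k).flip 1)
        ((TensorProduct.mk k A k).flip 1)
      = (TensorProduct.mk k (A ⊗[k] A) k).flip 1 := by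
    apply TensorProduct.ext'
    intro x y
    simp [hκ]
  have e0 : deltaT k A v
      = (tensorTensorTensorComm k A A A A) (TensorProduct.map comul comul v) := rfl
  rw [e0]
  have e1 := LinearMap.congr_fun claim1 (TensorProduct.map comul comul v)
  simp only [LinearMap.comp_apply, LinearEquiv.coe_coe] at e1
  rw [e1]
  have e2 := LinearMap.congr_fun claim2 v
  simp only [LinearMap.comp_apply] at e2
  rw [e2]
  exact LinearMap.congr_fun claim3 v

end AuxHopf

section AuxAntipode

variable {k : Type*} [Field k]
variable {A : Type*} [Ring A] [HopfAlgebra k A]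

open HopfAlgebra

theorem antipode_one' : antipode (R := k) (1 : A) = 1 := by
  have h := HopfAlgebra.mul_antipode_rTensor_comul_apply (R := k) (A := A) (a := (1 : A))
  rw [Bialgebra.comul_one, Bialgebra.counit_one, Algebra.TensorProduct.one_def] at h
  simpa using h

theorem antipode_mul_antidistrib' (a b : A) :
    antipode (R := k) (a * b) = antipode (R := k) b * antipode (R := k) a := by
  set F : A ⊗[k] A →ₗ[k] A := antipode (R := k) ∘ₗ mul' k A with hF
  set G : A ⊗[k] A →ₗ[k] A :=
    mul' k A ∘ₗ TensorProduct.map (antipode (R := k)) (antipode (R := k))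
      ∘ₗ (TensorProduct.comm k A A).toLinearMap with hG
  have h1 : conv (deltaT k A) F (mul' k A) = Algebra.linearMap k A ∘ₗ epsT k A := by
    have hA : mul' k A ∘ₗ TensorProduct.map F (mul' k A)
          ∘ₗ (tensorTensorTensorComm k A A A A).toLinearMap
        = mul' k A ∘ₗ rTensor A (antipode (R := k)) ∘ₗ mul' k (A ⊗[k] A) := by
      apply TensorProduct.ext_fourfold'
      intro x1 x2 y1 y2
      simp [hF, Algebra.TensorProduct.tmul_mul_tmul]
    have hB : mul' k (A ⊗[k] A) ∘ₗ TensorProduct.map (comul (R := k) (A := A)) comul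
        = comul ∘ₗ mul' k A := by
      apply TensorProduct.ext'
      intro x y
      simp [Bialgebra.comul_mul]
    have hC : counit (R := k) ∘ₗ mul' k A = epsT k A := by
      apply TensorProduct.ext'
      intro x y
      simp [epsT, Bialgebra.counit_mul]
    apply LinearMap.ext; intro v
    rw [conv_apply]
    have e0 : deltaT k A v
        = (tensorTensorTensorComm k A A A A) (TensorProduct.map comul comul v) := rfl
    rw [e0]
    have e1 := LinearMap.congr_fun hA (TensorProduct.map comul comul v)
    simp only [LinearMap.comp_apply, LinearEquiv.coe_coe] at e1
    rw [e1]
    have e2 := LinearMap.congr_fun hB v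
    simp only [LinearMap.comp_apply] at e2
    rw [e2]
    rw [HopfAlgebra.mul_antipode_rTensor_comul_apply]
    have e3 := LinearMap.congr_fun hC v
    simp only [LinearMap.comp_apply] at e3
    rw [e3]
    simp [Algebra.linearMap_apply]
  have h2 : conv (deltaT k A) (mul' k A) G = Algebra.linearMap k A ∘ₗ epsT k A := by
    set Q : (A ⊗[k] A) ⊗[k] A →ₗ[k] A :=
      mul' k A ∘ₗ lTensor A (mul' k A ∘ₗ lTensor A (antipode (R := k))
          ∘ₗ (TensorProduct.comm k A A).toLinearMap)
        ∘ₗ (TensorProduct.assoc k A A A).toLinearMap with hQ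
    have hA : mul' k A ∘ₗ TensorProduct.map (mul' k A) G
          ∘ₗ (tensorTensorTensorComm k A A A A).toLinearMap
        = Q ∘ₗ lTensor (A ⊗[k] A) (mul' k A ∘ₗ lTensor A (antipode (R := k))) := by
      apply TensorProduct.ext_fourfold'
      intro x1 x2 y1 y2
      simp [hG, hQ, mul_assoc]
    have hB : lTensor (A ⊗[k] A) (mul' k A ∘ₗ lTensor A (antipode (R := k)))
          ∘ₗ TensorProduct.map (comul (R := k) (A := A)) comul
        = TensorProduct.map (comul (R := k) (A := A))
            (Algebra.linearMap k A ∘ₗ counit (R := k)) := by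
      apply TensorProduct.ext'
      intro x y
      simp
    have hC : Q ∘ₗ TensorProduct.map (comul (R := k) (A := A))
          (Algebra.linearMap k A ∘ₗ counit (R := k))
        = Algebra.linearMap k A ∘ₗ epsT k A := by
      apply TensorProduct.ext'
      intro x y
      have hQ4 : ∀ u : A ⊗[k] A, Q (u ⊗ₜ[k] (1 : A))
          = mul' k A (lTensor A (antipode (R := k)) u) := by
        intro u
        induction u using TensorProduct.induction_on with
        | zero => simp
        | tmul x1 x2 => simp [hQ]
        | add u1 u2 hu1 hu2 => simp only [TensorProduct.add_tmul, map_add, hu1, hu2]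
      simp only [TensorProduct.map_tmul, LinearMap.comp_apply, Algebra.linearMap_apply]
      have : (algebraMap k A) (counit (R := k) y) = (counit (R := k) y) • (1 : A) := by
        rw [Algebra.smul_def, mul_one]
      rw [this, TensorProduct.tmul_smul, map_smul, hQ4]
      rw [HopfAlgebra.mul_antipode_lTensor_comul_apply]
      simp only [epsT, LinearMap.comp_apply, TensorProduct.map_tmul, LinearMap.mul'_apply,
        Algebra.smul_def, mul_one, ← map_mul]
      rw [mul_comm]
    apply LinearMap.ext; intro v
    rw [conv_apply]
    have e0 : deltaT k A v
        = (tensorTensorTensorComm k A A A A) (TensorProduct.map comul comul v) := rfl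
    rw [e0]
    have e1 := LinearMap.congr_fun hA (TensorProduct.map comul comul v)
    simp only [LinearMap.comp_apply, LinearEquiv.coe_coe] at e1
    rw [e1]
    have e2 := LinearMap.congr_fun hB v
    simp only [LinearMap.comp_apply] at e2
    rw [e2]
    exact LinearMap.congr_fun hC v
  have hFG : F = G :=
    conv_inv_unique (deltaT k A) (epsT k A) deltaT_coassoc deltaT_counit_left
      deltaT_counit_right h1 h2
  have := LinearMap.congr_fun hFG (a ⊗ₜ[k] b)
  simpa [hF, hG] using this

theorem hopf_inv_left {SAinv : A →ₗ[k] A}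
    (h1 : SAinv ∘ₗ antipode (R := k) = LinearMap.id)
    (h2 : antipode (R := k) ∘ₗ SAinv = LinearMap.id) (a : A) :
    mul' k A (lTensor A SAinv ((TensorProduct.comm k A A) (comul (R := k) a)))
      = counit (R := k) a • (1 : A) := by
  have hinj : Function.Injective (antipode (R := k) (A := A)) := by
    intro x y hxy
    have hx := LinearMap.congr_fun h1 x
    have hy := LinearMap.congr_fun h1 y
    simp only [LinearMap.comp_apply, LinearMap.id_apply] at hx hy
    rw [← hx, ← hy, hxy]
  apply hinj
  have key : antipode (R := k) ∘ₗ (mul' k A ∘ₗ lTensor A SAinv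
        ∘ₗ (TensorProduct.comm k A A).toLinearMap)
      = mul' k A ∘ₗ lTensor A (antipode (R := k)) := by
    apply TensorProduct.ext'
    intro x y
    have hxy := LinearMap.congr_fun h2 x
    simp only [LinearMap.comp_apply, LinearMap.id_apply] at hxy
    simp [antipode_mul_antidistrib', hxy]
  have e1 := LinearMap.congr_fun key (comul (R := k) a)
  simp only [LinearMap.comp_apply, LinearEquiv.coe_coe] at e1
  rw [e1, HopfAlgebra.mul_antipode_lTensor_comul_apply]
  rw [map_smul, antipode_one', Algebra.smul_def, mul_one]

theorem hopf_inv_right {SAinv : A →ₗ[k] A}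
    (h1 : SAinv ∘ₗ antipode (R := k) = LinearMap.id)
    (h2 : antipode (R := k) ∘ₗ SAinv = LinearMap.id) (a : A) :
    mul' k A (rTensor A SAinv ((TensorProduct.comm k A A) (comul (R := k) a)))
      = counit (R := k) a • (1 : A) := by
  have hinj : Function.Injective (antipode (R := k) (A := A)) := by
    intro x y hxy
    have hx := LinearMap.congr_fun h1 x
    have hy := LinearMap.congr_fun h1 y
    simp only [LinearMap.comp_apply, LinearMap.id_apply] at hx hy
    rw [← hx, ← hy, hxy]
  apply hinj
  have key : antipode (R := k) ∘ₗ (mul' k A ∘ₗ rTensor A SAinv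
        ∘ₗ (TensorProduct.comm k A A).toLinearMap)
      = mul' k A ∘ₗ rTensor A (antipode (R := k)) := by
    apply TensorProduct.ext'
    intro x y
    have hxy := LinearMap.congr_fun h2 y
    simp only [LinearMap.comp_apply, LinearMap.id_apply] at hxy
    simp [antipode_mul_antidistrib', hxy]
  have e1 := LinearMap.congr_fun key (comul (R := k) a)
  simp only [LinearMap.comp_apply, LinearEquiv.coe_coe] at e1
  rw [e1, HopfAlgebra.mul_antipode_rTensor_comul_apply]
  rw [map_smul, antipode_one', Algebra.smul_def, mul_one]

end AuxAntipode

/-- For a monoidal entwining datum `(C, A, φ)` and an entwined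
module `M` with dual entwined module `M*`, the evaluation `ev : M* ⊗ M → k` and
coevaluation `coev : k → M ⊗ M*` are right `A`-linear and right `C`-colinear for
the tensor-product entwined structures and the trivial structure on `k`. -/
theorem ev_coev_linear_colinear
    {k : Type*} [Field k] [CharZero k]
    {C A : Type*} [Ring C] [Ring A] [HopfAlgebra k C] [HopfAlgebra k A]
    [FiniteDimensional k C] [FiniteDimensional k A]
    (SAinv : A →ₗ[k] A)
    (hSA₁ : SAinv ∘ₗ HopfAlgebra.antipode (R := k) = LinearMap.id)
    (hSA₂ : HopfAlgebra.antipode (R := k) ∘ₗ SAinv = LinearMap.id)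
    (SCinv : C →ₗ[k] C)
    (hSC₁ : SCinv ∘ₗ HopfAlgebra.antipode (R := k) = LinearMap.id)
    (hSC₂ : HopfAlgebra.antipode (R := k) ∘ₗ SCinv = LinearMap.id)
    (φ : C ⊗[k] A →ₗ[k] A ⊗[k] C) (hφ : IsMonoidalEntwining k C A φ)
    (M : Type*) [AddCommGroup M] [Module k M] [FiniteDimensional k M]
    (act : M ⊗[k] A →ₗ[k] M) (ρ : M →ₗ[k] M ⊗[k] C)
    (hM : IsEntwinedModule k C A M φ act ρ)
    -- the dual entwined module structure on `M*`
    (act' : Module.Dual k M ⊗[k] A →ₗ[k] Module.Dual k M)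
    (ρ' : Module.Dual k M →ₗ[k] Module.Dual k M ⊗[k] C)
    (hact' : ∀ (f : Module.Dual k M) (a : A) (m : M),
      act' (f ⊗ₜ[k] a) m = f (act (m ⊗ₜ[k] SAinv a)))
    (hρ' : ∀ (f : Module.Dual k M) (m : M),
      (TensorProduct.lid k C) (rTensor C (Module.Dual.eval k M m) (ρ' f)) =
        (TensorProduct.lid k C)
          (TensorProduct.map (f : M →ₗ[k] k) (HopfAlgebra.antipode (R := k)) (ρ m))) :
    -- `ev` is `A`-linear
    (contractLeft k M ∘ₗ tensorAct k (Module.Dual k M) M act' act =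
      trivAct k (A := A) ∘ₗ rTensor A (contractLeft k M)) ∧
    -- `ev` is `C`-colinear
    (rTensor C (contractLeft k M) ∘ₗ tensorCoact k (Module.Dual k M) M ρ' ρ =
      trivCoact k (C := C) ∘ₗ contractLeft k M) ∧
    -- `coev` is `A`-linear
    (tensorAct k M (Module.Dual k M) act act' ∘ₗ rTensor A (coevaluation k M) =
      coevaluation k M ∘ₗ trivAct k (A := A)) ∧
    -- `coev` is `C`-colinear
    (tensorCoact k M (Module.Dual k M) ρ ρ' ∘ₗ coevaluation k M =
      rTensor C (coevaluation k M) ∘ₗ trivCoact k (C := C)) := by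

  classical
  -- pointwise module/comodule facts
  have hact_one : ∀ m : M, act (m ⊗ₜ[k] (1 : A)) = m := hM.1
  have hact_assoc : ∀ (m : M) (x y : A),
      act (act (m ⊗ₜ[k] x) ⊗ₜ[k] y) = act (m ⊗ₜ[k] (x * y)) := by
    intro m x y
    have h := LinearMap.congr_fun hM.2.1 ((m ⊗ₜ[k] x) ⊗ₜ[k] y)
    simpa using h
  have hcoassoc : ∀ m : M, rTensor C ρ (ρ m)
      = (TensorProduct.assoc k M C C).symm (lTensor M (comul (R := k) (A := C)) (ρ m)) := by
    intro m
    have h := LinearMap.congr_fun hM.2.2.1 m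
    simpa using h
  have hcounit : ∀ m : M, lTensor M (counit (R := k) (A := C)) (ρ m) = m ⊗ₜ[k] (1 : k) := by
    intro m
    have h := LinearMap.congr_fun hM.2.2.2.1 m
    simp only [LinearMap.comp_apply, LinearEquiv.coe_coe, LinearMap.id_apply] at h
    have h2 := congrArg (TensorProduct.rid k M).symm h
    rw [LinearEquiv.symm_apply_apply, TensorProduct.rid_symm_apply] at h2
    exact h2
  have hρ'' : ∀ (f : Module.Dual k M) (x : M),
      rTensor C (Module.Dual.eval k M x) (ρ' f)
        = TensorProduct.map (f : M →ₗ[k] k) (HopfAlgebra.antipode (R := k)) (ρ x) := by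
    intro f x
    exact (TensorProduct.lid k C).injective (hρ' f x)
  have hopfA : ∀ a : A,
      mul' k A (lTensor A SAinv ((TensorProduct.comm k A A) (comul (R := k) a)))
        = counit (R := k) a • (1 : A) := fun a => hopf_inv_left hSA₁ hSA₂ a
  have hopfB : ∀ a : A,
      mul' k A (rTensor A SAinv ((TensorProduct.comm k A A) (comul (R := k) a)))
        = counit (R := k) a • (1 : A) := fun a => hopf_inv_right hSA₁ hSA₂ a
  set b := Module.Basis.ofVectorSpace k M with hb
  refine ⟨?_, ?_, ?_, ?_⟩
  · -- ev is A-linear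
    apply TensorProduct.ext_threefold
    intro f m a
    have aux1 : ∀ z : A ⊗[k] A,
        contractLeft k M (TensorProduct.map act' act
          ((tensorTensorTensorComm k (Module.Dual k M) M A A) ((f ⊗ₜ[k] m) ⊗ₜ[k] z)))
        = f (act (m ⊗ₜ[k] (mul' k A (lTensor A SAinv ((TensorProduct.comm k A A) z))))) := by
      intro z
      induction z using TensorProduct.induction_on with
      | zero => simp
      | tmul x y =>
        simp only [tensorTensorTensorComm_tmul, TensorProduct.map_tmul, contractLeft_apply,
          TensorProduct.comm_tmul, lTensor_tmul, LinearMap.mul'_apply]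
        rw [hact' f x (act (m ⊗ₜ[k] y)), hact_assoc]
      | add u v hu hv =>
        simp only [TensorProduct.tmul_add, map_add, hu, hv]
    simp only [tensorAct, trivAct, LinearMap.comp_apply, lTensor_tmul, LinearEquiv.coe_coe,
      rTensor_tmul, contractLeft_apply]
    rw [aux1 (comul (R := k) a), hopfA a]
    rw [TensorProduct.tmul_smul, map_smul, hact_one, map_smul]
    simp only [TensorProduct.lid_tmul, map_smul, smul_eq_mul]
    rw [mul_comm]
  · -- ev is C-colinear
    apply TensorProduct.ext'
    intro f m
    have aux2a : ∀ (x : M) (c : C) (u : Module.Dual k M ⊗[k] C),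
        rTensor C (contractLeft k M) (lTensor (Module.Dual k M ⊗[k] M) (mul' k C)
          ((tensorTensorTensorComm k (Module.Dual k M) C M C) (u ⊗ₜ[k] (x ⊗ₜ[k] c))))
        = lTensor k (LinearMap.mulRight k c) (rTensor C (Module.Dual.eval k M x) u) := by
      intro x c u
      induction u using TensorProduct.induction_on with
      | zero => simp
      | tmul g d =>
        simp [Module.Dual.eval_apply]
      | add u1 u2 h1 h2 => simp only [TensorProduct.add_tmul, map_add, h1, h2]
    have aux2c : ∀ (v : k ⊗[k] C) (c : C),
        lTensor k (mul' k C) ((TensorProduct.assoc k k C C) (v ⊗ₜ[k] c))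
          = lTensor k (LinearMap.mulRight k c) v := by
      intro v c
      induction v using TensorProduct.induction_on with
      | zero => simp
      | tmul r d => simp
      | add v1 v2 h1 h2 => simp only [TensorProduct.add_tmul, map_add, h1, h2]
    set T : M ⊗[k] C →ₗ[k] k ⊗[k] C :=
      lTensor k (mul' k C) ∘ₗ (TensorProduct.assoc k k C C).toLinearMap
        ∘ₗ rTensor C (TensorProduct.map (f : M →ₗ[k] k) (HopfAlgebra.antipode (R := k)) ∘ₗ ρ)
      with hT
    have aux2b : ∀ w : M ⊗[k] C,
        rTensor C (contractLeft k M) (lTensor (Module.Dual k M ⊗[k] M) (mul' k C)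
          ((tensorTensorTensorComm k (Module.Dual k M) C M C) ((ρ' f) ⊗ₜ[k] w))) = T w := by
      intro w
      induction w using TensorProduct.induction_on with
      | zero => simp
      | tmul x c =>
        rw [aux2a x c (ρ' f), hρ'' f x]
        simp only [hT, LinearMap.comp_apply, rTensor_tmul, LinearEquiv.coe_coe]
        rw [aux2c]
      | add w1 w2 h1 h2 => simp only [TensorProduct.tmul_add, map_add, h1, h2]
    simp only [tensorCoact, trivCoact, LinearMap.comp_apply, TensorProduct.map_tmul,
      LinearEquiv.coe_coe, contractLeft_apply]
    rw [aux2b (ρ m)]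
    -- compute T (ρ m)
    have step1 : rTensor C (TensorProduct.map (f : M →ₗ[k] k)
          (HopfAlgebra.antipode (R := k)) ∘ₗ ρ) (ρ m)
        = rTensor C (TensorProduct.map (f : M →ₗ[k] k) (HopfAlgebra.antipode (R := k)))
            (rTensor C ρ (ρ m)) := by
      rw [LinearMap.rTensor_comp, LinearMap.comp_apply]
    have aux2e : ∀ (x : M) (z : C ⊗[k] C),
        lTensor k (mul' k C) ((TensorProduct.assoc k k C C)
          (rTensor C (TensorProduct.map (f : M →ₗ[k] k) (HopfAlgebra.antipode (R := k)))
            ((TensorProduct.assoc k M C C).symm (x ⊗ₜ[k] z))))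
        = (f x) ⊗ₜ[k] (mul' k C (rTensor C (HopfAlgebra.antipode (R := k)) z)) := by
      intro x z
      induction z using TensorProduct.induction_on with
      | zero => simp
      | tmul c1 c2 => simp
      | add z1 z2 h1 h2 =>
        simp only [TensorProduct.tmul_add, map_add, h1, h2]
    have hTval : T (ρ m) = (f m) ⊗ₜ[k] (1 : C) := by
      simp only [hT, LinearMap.comp_apply, LinearEquiv.coe_coe]
      rw [step1, hcoassoc m]
      have aux2d : ∀ w : M ⊗[k] C,
          lTensor k (mul' k C) ((TensorProduct.assoc k k C C)
            (rTensor C (TensorProduct.map (f : M →ₗ[k] k) (HopfAlgebra.antipode (R := k)))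
              ((TensorProduct.assoc k M C C).symm
                (lTensor M (comul (R := k) (A := C)) w))))
          = rTensor C (f : M →ₗ[k] k)
              (lTensor M (Algebra.linearMap k C ∘ₗ counit (R := k)) w) := by
        intro w
        induction w using TensorProduct.induction_on with
        | zero => simp
        | tmul x c =>
          simp only [lTensor_tmul]
          rw [aux2e x (comul (R := k) c)]
          rw [HopfAlgebra.mul_antipode_rTensor_comul_apply]
          simp
        | add w1 w2 h1 h2 => simp only [map_add, h1, h2]
      rw [aux2d (ρ m)]
      rw [LinearMap.lTensor_comp, LinearMap.comp_apply, hcounit m]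
      simp
    rw [hTval]
    simp [TensorProduct.mk_apply]
  · -- coev is A-linear
    apply TensorProduct.ext'
    intro r a
    have hra : r ⊗ₜ[k] a = r • ((1 : k) ⊗ₜ[k] a) := by
      rw [TensorProduct.smul_tmul', smul_eq_mul, mul_one]
    rw [hra, map_smul, map_smul]
    congr 1
    have hcoev1 : coevaluation k M (1 : k)
        = ∑ i : Module.Basis.ofVectorSpaceIndex k M, b i ⊗ₜ[k] b.coord i := coevaluation_apply_one k M
    have aux3 : ∀ z : A ⊗[k] A,
        (∑ i : Module.Basis.ofVectorSpaceIndex k M, TensorProduct.map act act'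
          ((tensorTensorTensorComm k M (Module.Dual k M) A A) ((b i ⊗ₜ[k] b.coord i) ⊗ₜ[k] z)))
        = ∑ j : Module.Basis.ofVectorSpaceIndex k M,
            act (b j ⊗ₜ[k] (mul' k A (rTensor A SAinv ((TensorProduct.comm k A A) z))))
              ⊗ₜ[k] (b.coord j : Module.Dual k M) := by
      intro z
      induction z using TensorProduct.induction_on with
      | zero => simp
      | tmul x y =>
        simp only [tensorTensorTensorComm_tmul, TensorProduct.map_tmul,
          TensorProduct.comm_tmul, rTensor_tmul, LinearMap.mul'_apply]
        have hexp : ∀ i : Module.Basis.ofVectorSpaceIndex k M,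
            act' ((b.coord i : Module.Dual k M) ⊗ₜ[k] y)
              = ∑ j : Module.Basis.ofVectorSpaceIndex k M,
                  (b.coord i) (act (b j ⊗ₜ[k] SAinv y)) • (b.coord j : Module.Dual k M) := by
          intro i
          conv_lhs => rw [← Module.Basis.sum_dual_apply_smul_coord b (act' ((b.coord i) ⊗ₜ[k] y))]
          refine Finset.sum_congr rfl fun j _ => ?_
          rw [hact']
        calc ∑ i : Module.Basis.ofVectorSpaceIndex k M,
              act (b i ⊗ₜ[k] x) ⊗ₜ[k] act' ((b.coord i : Module.Dual k M) ⊗ₜ[k] y)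
            = ∑ i : Module.Basis.ofVectorSpaceIndex k M, ∑ j : Module.Basis.ofVectorSpaceIndex k M,
                (b.coord i) (act (b j ⊗ₜ[k] SAinv y))
                  • (act (b i ⊗ₜ[k] x) ⊗ₜ[k] (b.coord j : Module.Dual k M)) := by
              refine Finset.sum_congr rfl fun i _ => ?_
              rw [hexp i, TensorProduct.tmul_sum]
              exact Finset.sum_congr rfl fun j _ => TensorProduct.tmul_smul _ _ _
          _ = ∑ j : Module.Basis.ofVectorSpaceIndex k M, ∑ i : Module.Basis.ofVectorSpaceIndex k M,
                (b.coord i) (act (b j ⊗ₜ[k] SAinv y))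
                  • (act (b i ⊗ₜ[k] x) ⊗ₜ[k] (b.coord j : Module.Dual k M)) :=
              Finset.sum_comm
          _ = ∑ j : Module.Basis.ofVectorSpaceIndex k M,
                act (b j ⊗ₜ[k] (SAinv y * x)) ⊗ₜ[k] (b.coord j : Module.Dual k M) := by
              refine Finset.sum_congr rfl fun j _ => ?_
              simp only [TensorProduct.smul_tmul']
              rw [← TensorProduct.sum_tmul]
              congr 1
              have key : ∑ i : Module.Basis.ofVectorSpaceIndex k M,
                  (b.coord i) (act (b j ⊗ₜ[k] SAinv y)) • act (b i ⊗ₜ[k] x)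
                  = act ((act (b j ⊗ₜ[k] SAinv y)) ⊗ₜ[k] x) := by
                have h1 : ∑ i : Module.Basis.ofVectorSpaceIndex k M,
                    (b.coord i) (act (b j ⊗ₜ[k] SAinv y)) • act (b i ⊗ₜ[k] x)
                    = act ((∑ i : Module.Basis.ofVectorSpaceIndex k M,
                        (b.coord i) (act (b j ⊗ₜ[k] SAinv y)) • b i) ⊗ₜ[k] x) := by
                  rw [TensorProduct.sum_tmul, map_sum]
                  refine Finset.sum_congr rfl fun i _ => ?_
                  rw [← TensorProduct.smul_tmul', map_smul]
                rw [h1]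
                congr 2
                simpa [Module.Basis.coord_apply] using b.sum_repr (act (b j ⊗ₜ[k] SAinv y))
              rw [key, hact_assoc]
      | add u v hu hv =>
        simp only [TensorProduct.tmul_add, map_add, TensorProduct.add_tmul,
          Finset.sum_add_distrib, hu, hv]
    -- assemble
    simp only [tensorAct, trivAct, LinearMap.comp_apply, rTensor_tmul, LinearEquiv.coe_coe,
      TensorProduct.lid_tmul, one_smul, lTensor_tmul]
    rw [hcoev1]
    rw [TensorProduct.sum_tmul, map_sum, map_sum]
    rw [aux3 (comul (R := k) a), hopfB a]
    have hrhs : coevaluation k M (counit (R := k) a)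
        = counit (R := k) a • coevaluation k M (1 : k) := by
      rw [← map_smul, smul_eq_mul, mul_one]
    rw [hrhs, hcoev1, Finset.smul_sum]
    refine Finset.sum_congr rfl fun j _ => ?_
    rw [TensorProduct.tmul_smul, map_smul, hact_one, TensorProduct.smul_tmul']
  · -- coev is C-colinear
    apply LinearMap.ext_ring
    simp only [LinearMap.comp_apply]
    have hcoev1 : coevaluation k M (1 : k)
        = ∑ i : Module.Basis.ofVectorSpaceIndex k M, b i ⊗ₜ[k] b.coord i := coevaluation_apply_one k M
    set θ : M → ((M ⊗[k] Module.Dual k M) ⊗[k] C →ₗ[k] M ⊗[k] C) := fun x =>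
      rTensor C ((TensorProduct.rid k M).toLinearMap ∘ₗ lTensor M (Module.Dual.eval k M x))
      with hθ
    have expand4 : ∀ z : (M ⊗[k] Module.Dual k M) ⊗[k] C,
        z = ∑ j : Module.Basis.ofVectorSpaceIndex k M,
          rTensor C ((TensorProduct.mk k M (Module.Dual k M)).flip (b.coord j)) (θ (b j) z) := by
      intro z
      induction z using TensorProduct.induction_on with
      | zero => simp
      | tmul v c =>
        induction v using TensorProduct.induction_on with
        | zero => simp
        | tmul y g =>
          have hterm : ∀ j : Module.Basis.ofVectorSpaceIndex k M,
              rTensor C ((TensorProduct.mk k M (Module.Dual k M)).flip (b.coord j))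
                (θ (b j) ((y ⊗ₜ[k] g) ⊗ₜ[k] c))
              = (y ⊗ₜ[k] (g (b j) • (b.coord j : Module.Dual k M))) ⊗ₜ[k] c := by
            intro j
            simp only [hθ, rTensor_tmul, LinearMap.comp_apply, lTensor_tmul,
              LinearEquiv.coe_toLinearMap, Module.Dual.eval_apply, TensorProduct.rid_tmul,
              TensorProduct.mk_apply, LinearMap.flip_apply]
            rw [TensorProduct.smul_tmul]
          rw [Finset.sum_congr rfl fun j _ => hterm j]
          rw [← TensorProduct.sum_tmul, ← TensorProduct.tmul_sum]
          rw [Module.Basis.sum_dual_apply_smul_coord]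
        | add v1 v2 h1 h2 =>
          simp only [TensorProduct.add_tmul, map_add]
          rw [Finset.sum_add_distrib, ← h1, ← h2]
      | add z1 z2 h1 h2 =>
        simp only [map_add]
        rw [Finset.sum_add_distrib, ← h1, ← h2]
    set F : (M ⊗[k] C) ⊗[k] (k ⊗[k] C) →ₗ[k] M ⊗[k] C :=
      TensorProduct.map (TensorProduct.rid k M).toLinearMap (mul' k C)
        ∘ₗ (tensorTensorTensorComm k M C k C).toLinearMap with hF
    set J : (M ⊗[k] C) ⊗[k] C →ₗ[k] M ⊗[k] C :=
      TensorProduct.map LinearMap.id (mul' k C)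
        ∘ₗ (TensorProduct.assoc k M C C).toLinearMap with hJ
    have aux4a : ∀ (x : M) (w : M ⊗[k] C) (u : Module.Dual k M ⊗[k] C),
        θ x (lTensor (M ⊗[k] Module.Dual k M) (mul' k C)
          ((tensorTensorTensorComm k M C (Module.Dual k M) C) (w ⊗ₜ[k] u)))
        = F (w ⊗ₜ[k] (rTensor C (Module.Dual.eval k M x) u)) := by
      intro x w u
      induction w using TensorProduct.induction_on with
      | zero => simp
      | tmul y c =>
        induction u using TensorProduct.induction_on with
        | zero => simp
        | tmul g d =>
          simp [hθ, hF, Module.Dual.eval_apply, TensorProduct.rid_tmul,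
            TensorProduct.smul_tmul']
        | add u1 u2 h1 h2 =>
          simp only [TensorProduct.tmul_add, map_add, h1, h2]
      | add w1 w2 h1 h2 =>
        simp only [TensorProduct.add_tmul, map_add, h1, h2]
    have claim4f : ∀ (v : M ⊗[k] C) (d : C), F (v ⊗ₜ[k] ((1 : k) ⊗ₜ[k] d)) = J (v ⊗ₜ[k] d) := by
      intro v d
      induction v using TensorProduct.induction_on with
      | zero => simp
      | tmul y c => simp [hF, hJ, TensorProduct.rid_tmul]
      | add v1 v2 h1 h2 => simp only [TensorProduct.add_tmul, map_add, h1, h2]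
    have aux4d : ∀ w : M ⊗[k] C,
        (∑ i : Module.Basis.ofVectorSpaceIndex k M, F ((ρ (b i)) ⊗ₜ[k]
          (TensorProduct.map (b.coord i : M →ₗ[k] k) (HopfAlgebra.antipode (R := k)) w)))
        = J (TensorProduct.map ρ (HopfAlgebra.antipode (R := k)) w) := by
      intro w
      induction w using TensorProduct.induction_on with
      | zero => simp
      | tmul x' c =>
        simp only [TensorProduct.map_tmul]
        have hterm : ∀ i : Module.Basis.ofVectorSpaceIndex k M,
            F ((ρ (b i)) ⊗ₜ[k] ((b.coord i) x' ⊗ₜ[k] (HopfAlgebra.antipode (R := k) c)))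
            = (b.coord i) x' • J ((ρ (b i)) ⊗ₜ[k] (HopfAlgebra.antipode (R := k) c)) := by
          intro i
          rw [show ((b.coord i) x' ⊗ₜ[k] (HopfAlgebra.antipode (R := k) c))
              = (b.coord i) x' • ((1 : k) ⊗ₜ[k] (HopfAlgebra.antipode (R := k) c)) by
            rw [TensorProduct.smul_tmul', smul_eq_mul, mul_one]]
          rw [TensorProduct.tmul_smul, map_smul, claim4f]
        rw [Finset.sum_congr rfl fun i _ => hterm i]
        have : ∑ i : Module.Basis.ofVectorSpaceIndex k M,
            (b.coord i) x' • J ((ρ (b i)) ⊗ₜ[k] (HopfAlgebra.antipode (R := k) c))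
            = J ((∑ i : Module.Basis.ofVectorSpaceIndex k M, (b.coord i) x' • ρ (b i))
                ⊗ₜ[k] (HopfAlgebra.antipode (R := k) c)) := by
          rw [TensorProduct.sum_tmul, map_sum]
          refine Finset.sum_congr rfl fun i _ => ?_
          rw [← TensorProduct.smul_tmul', map_smul]
        rw [this]
        congr 2
        have : ∑ i : Module.Basis.ofVectorSpaceIndex k M, (b.coord i) x' • ρ (b i)
            = ρ (∑ i : Module.Basis.ofVectorSpaceIndex k M, (b.coord i) x' • b i) := by
          rw [map_sum]
          exact Finset.sum_congr rfl fun i _ => (map_smul ρ _ _).symm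
        rw [this]
        congr 1
        simpa [Module.Basis.coord_apply] using b.sum_repr x'
      | add w1 w2 h1 h2 =>
        simp only [TensorProduct.tmul_add, map_add, Finset.sum_add_distrib, h1, h2]
    have hmaps : ∀ w : M ⊗[k] C,
        TensorProduct.map ρ (HopfAlgebra.antipode (R := k)) w
        = lTensor (M ⊗[k] C) (HopfAlgebra.antipode (R := k)) (rTensor C ρ w) := by
      intro w
      induction w using TensorProduct.induction_on with
      | zero => simp
      | tmul y c => simp
      | add w1 w2 h1 h2 => simp only [map_add, h1, h2]
    have aux4g : ∀ (x' : M) (z : C ⊗[k] C),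
        J (lTensor (M ⊗[k] C) (HopfAlgebra.antipode (R := k))
          ((TensorProduct.assoc k M C C).symm (x' ⊗ₜ[k] z)))
        = x' ⊗ₜ[k] (mul' k C (lTensor C (HopfAlgebra.antipode (R := k)) z)) := by
      intro x' z
      induction z using TensorProduct.induction_on with
      | zero => simp
      | tmul c1 c2 => simp [hJ]
      | add z1 z2 h1 h2 =>
        simp only [TensorProduct.tmul_add, map_add, h1, h2]
    have aux4e : ∀ w : M ⊗[k] C,
        J (lTensor (M ⊗[k] C) (HopfAlgebra.antipode (R := k))
          ((TensorProduct.assoc k M C C).symm (lTensor M (comul (R := k) (A := C)) w)))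
        = lTensor M (Algebra.linearMap k C ∘ₗ counit (R := k)) w := by
      intro w
      induction w using TensorProduct.induction_on with
      | zero => simp
      | tmul x' c =>
        simp only [lTensor_tmul]
        rw [aux4g x' (comul (R := k) c), HopfAlgebra.mul_antipode_lTensor_comul_apply]
        simp
      | add w1 w2 h1 h2 => simp only [map_add, h1, h2]
    have hL : ∀ x : M,
        θ x ((tensorCoact k M (Module.Dual k M) ρ ρ') (coevaluation k M (1 : k)))
          = x ⊗ₜ[k] (1 : C) := by
      intro x
      rw [hcoev1]
      simp only [tensorCoact, LinearMap.comp_apply, map_sum]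
      rw [Finset.sum_congr rfl fun i _ => by
        simp only [TensorProduct.map_tmul, LinearEquiv.coe_coe]
        rw [aux4a x (ρ (b i)) (ρ' (b.coord i)), hρ'' (b.coord i) x]]
      rw [aux4d (ρ x), hmaps (ρ x), hcoassoc x, aux4e (ρ x)]
      rw [LinearMap.lTensor_comp, LinearMap.comp_apply, hcounit x]
      simp
    have hR : ∀ x : M,
        θ x ((coevaluation k M (1 : k)) ⊗ₜ[k] (1 : C)) = x ⊗ₜ[k] (1 : C) := by
      intro x
      rw [hcoev1]
      simp only [hθ, rTensor_tmul, LinearMap.comp_apply, map_sum, lTensor_tmul,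
        LinearEquiv.coe_toLinearMap, Module.Dual.eval_apply, TensorProduct.rid_tmul]
      congr 1
      simpa [Module.Basis.coord_apply] using b.sum_repr x
    have hRHS : rTensor C (coevaluation k M) ((trivCoact k (C := C)) (1 : k))
        = (coevaluation k M (1 : k)) ⊗ₜ[k] (1 : C) := by
      simp [trivCoact]
    rw [hRHS]
    rw [expand4 ((tensorCoact k M (Module.Dual k M) ρ ρ') (coevaluation k M (1 : k))),
      expand4 ((coevaluation k M (1 : k)) ⊗ₜ[k] (1 : C))]
    exact Finset.sum_congr rfl fun j _ => by rw [hL (b j), hR (b j)]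


end Paper
end
end

section
/- Let (C, A, φ) be a monoidal entwining datum over k, with C and A finite-dimensional Hopf algebras with bijective antipodes. If a k-linear map 𝔤: C → A satisfies Δ_A(𝔤(cd)) = 𝔤(c) ⊗ 𝔤(d) for all c, d ∈ C and ε_A(𝔤(1_C)) = 1, then 𝔤 is invertible with respect to the entwined convolution product on Hom_k(C, A): there exists 𝔤' ∈ Hom_k(C, A) with 𝔤 ★ 𝔤' = 𝔤' ★ 𝔤 = η_A ∘ ε_C. -/
set_option maxHeartbeats 1000000
set_option synthInstance.maxHeartbeats 1000000


open TensorProduct LinearMap Coalgebra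

noncomputable section

namespace Paper

section Conv

variable (k : Type*) [Field k]
variable {C A : Type*} [AddCommGroup C] [Module k C] [Coalgebra k C] [Ring A] [Algebra k A]

/-- The entwined convolution product `(g ★ f)(c) = Σ f(c₂)_φ g(c₁^φ)`. -/
def econv (φ : C ⊗[k] A →ₗ[k] A ⊗[k] C) (g f : C →ₗ[k] A) : C →ₗ[k] A :=
  mul' k A ∘ₗ lTensor A g ∘ₗ φ ∘ₗ lTensor C f ∘ₗ comul (R := k) (A := C)

/-- The unit `η_A ∘ ε_C` of the entwined convolution algebra. -/
def econvUnit : C →ₗ[k] A :=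
  Algebra.linearMap k A ∘ₗ counit (R := k) (A := C)

end Conv

section Aux

variable {k : Type*} [Field k]
variable {C A : Type*} [AddCommGroup C] [Module k C] [Coalgebra k C] [Ring A] [Algebra k A]

/-- `a ⊗ x ↦ lamS x • a`. -/
def Nmap (lamS : C →ₗ[k] k) : A ⊗[k] C →ₗ[k] A :=
  (TensorProduct.rid k A).toLinearMap ∘ₗ lTensor A lamS

@[simp] lemma Nmap_tmul (lamS : C →ₗ[k] k) (a : A) (x : C) :
    Nmap lamS (a ⊗ₜ[k] x) = lamS x • a := by
  simp [Nmap]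

/-- The RHS composite of (E1), viewed as a map `(A ⊗ C) ⊗ A → A ⊗ C`. -/
def Kmap (φ : C ⊗[k] A →ₗ[k] A ⊗[k] C) : (A ⊗[k] C) ⊗[k] A →ₗ[k] A ⊗[k] C :=
  rTensor C (mul' k A) ∘ₗ (TensorProduct.assoc k A A C).symm.toLinearMap ∘ₗ
    lTensor A φ ∘ₗ (TensorProduct.assoc k A C A).toLinearMap

/-- `a ⊗ z ↦ mu z • (a * u)`. -/
def Pmap (mu : C ⊗[k] C →ₗ[k] k) (u : A) : A ⊗[k] (C ⊗[k] C) →ₗ[k] A :=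
  LinearMap.mulRight k u ∘ₗ (TensorProduct.rid k A).toLinearMap ∘ₗ lTensor A mu

@[simp] lemma Pmap_tmul (mu : C ⊗[k] C →ₗ[k] k) (u : A) (a : A) (z : C ⊗[k] C) :
    Pmap mu u (a ⊗ₜ[k] z) = mu z • (a * u) := by
  simp [Pmap, smul_mul_assoc]

lemma Nmap_K_aux (lamS : C →ₗ[k] k) (a : A) :
    Nmap lamS ∘ₗ rTensor C (mul' k A) ∘ₗ (TensorProduct.assoc k A A C).symm.toLinearMap ∘ₗ
        TensorProduct.mk k A (A ⊗[k] C) a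
      = LinearMap.mulLeft k a ∘ₗ Nmap lamS := by
  apply TensorProduct.ext'
  intro b y
  simp [Nmap, TensorProduct.assoc_symm_tmul, mul_smul_comm]

/-- `mul' ∘ lTensor 𝔤' = Nmap lamS ∘ Kmap φ ∘ (· ⊗ v)` where
`𝔤' = Nmap lamS ∘ φ ∘ (· ⊗ v)`. -/
lemma mul_lTensor_g' (φ : C ⊗[k] A →ₗ[k] A ⊗[k] C) (lamS : C →ₗ[k] k) (v : A) :
    mul' k A ∘ₗ lTensor A (Nmap lamS ∘ₗ φ ∘ₗ (TensorProduct.mk k C A).flip v)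
      = Nmap lamS ∘ₗ Kmap φ ∘ₗ (TensorProduct.mk k (A ⊗[k] C) A).flip v := by
  apply TensorProduct.ext'
  intro a y
  have h1 := LinearMap.congr_fun (Nmap_K_aux (A := A) lamS a) (φ (y ⊗ₜ[k] v))
  simp only [LinearMap.comp_apply, TensorProduct.mk_apply, LinearMap.mulLeft_apply] at h1
  simp only [LinearMap.comp_apply, TensorProduct.mk_apply, LinearMap.flip_apply,
    lTensor_tmul, Kmap, LinearEquiv.coe_coe, TensorProduct.assoc_tmul, mul'_apply]
  exact h1.symm

lemma Pmap_assoc_aux (mu : C ⊗[k] C →ₗ[k] k) (lam lamS : C →ₗ[k] k) (u : A) (y : C)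
    (hmu : ∀ (x y' : C), mu (x ⊗ₜ[k] y') = lam x * lamS y') :
    Pmap mu u ∘ₗ (TensorProduct.assoc k A C C).toLinearMap ∘ₗ
        (TensorProduct.mk k (A ⊗[k] C) C).flip y
      = lamS y • (LinearMap.mulRight k u ∘ₗ Nmap lam) := by
  apply TensorProduct.ext'
  intro a x
  simp [TensorProduct.assoc_tmul, hmu, mul_comm (lam x) (lamS y), mul_smul,
    smul_mul_assoc]

/-- Key lemma for direction 1, derived from (E2)'s RHS composite:
`Pmap mu u ∘ assoc ∘ rTensor φ ∘ assoc.symm = Nmap lamS ∘ rTensor H ∘ assoc.symm`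
where `H = mul' ∘ lTensor 𝔤 ∘ φ`. -/
lemma Pmap_rTensor_phi (φ : C ⊗[k] A →ₗ[k] A ⊗[k] C) (mu : C ⊗[k] C →ₗ[k] k)
    (lam lamS : C →ₗ[k] k) (u : A) (𝔤 : C →ₗ[k] A)
    (hmu : ∀ (x y : C), mu (x ⊗ₜ[k] y) = lam x * lamS y)
    (hg : mul' k A ∘ₗ lTensor A 𝔤 = LinearMap.mulRight k u ∘ₗ Nmap lam) :
    Pmap mu u ∘ₗ (TensorProduct.assoc k A C C).toLinearMap ∘ₗ rTensor C φ
      = Nmap lamS ∘ₗ rTensor C (mul' k A ∘ₗ lTensor A 𝔤 ∘ₗ φ) := by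
  apply TensorProduct.ext'
  intro z y
  have h1 := LinearMap.congr_fun (Pmap_assoc_aux (A := A) mu lam lamS u y hmu) (φ z)
  simp only [LinearMap.comp_apply, TensorProduct.mk_apply, LinearMap.flip_apply,
    LinearMap.smul_apply] at h1
  simp only [LinearMap.comp_apply, rTensor_tmul, LinearMap.comp_apply]
  rw [h1, Nmap_tmul]
  congr 1
  exact (LinearMap.congr_fun hg (φ z)).symm

lemma H_Nmap_aux (lamS : C →ₗ[k] k) (H : C ⊗[k] A →ₗ[k] A) (x : C) :
    H ∘ₗ TensorProduct.mk k C A x ∘ₗ Nmap lamS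
      = Nmap lamS ∘ₗ rTensor C H ∘ₗ (TensorProduct.assoc k C A C).symm.toLinearMap ∘ₗ
          TensorProduct.mk k C (A ⊗[k] C) x := by
  apply TensorProduct.ext'
  intro a y
  simp [TensorProduct.assoc_symm_tmul, Nmap]

end Aux

/-- If `𝔤 : C → A` satisfies `Δ_A(𝔤(cd)) = 𝔤(c) ⊗ 𝔤(d)` and
`ε_A(𝔤(1_C)) = 1`, then `𝔤` is invertible with respect to the entwined
convolution product on `Hom_k(C, A)`. -/
theorem pivotal_morphism_econv_invertible
    {k : Type*} [Field k] [CharZero k]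
    {C A : Type*} [Ring C] [Ring A] [HopfAlgebra k C] [HopfAlgebra k A]
    [FiniteDimensional k C] [FiniteDimensional k A]
    (SAinv : A →ₗ[k] A)
    (hSA₁ : SAinv ∘ₗ HopfAlgebra.antipode (R := k) = LinearMap.id)
    (hSA₂ : HopfAlgebra.antipode (R := k) ∘ₗ SAinv = LinearMap.id)
    (SCinv : C →ₗ[k] C)
    (hSC₁ : SCinv ∘ₗ HopfAlgebra.antipode (R := k) = LinearMap.id)
    (hSC₂ : HopfAlgebra.antipode (R := k) ∘ₗ SCinv = LinearMap.id)
    (φ : C ⊗[k] A →ₗ[k] A ⊗[k] C) (hφ : IsMonoidalEntwining k C A φ)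
    (𝔤 : C →ₗ[k] A)
    (h𝔤₁ : ∀ c d : C, comul (R := k) (𝔤 (c * d)) = 𝔤 c ⊗ₜ[k] 𝔤 d)
    (h𝔤₂ : counit (R := k) (𝔤 (1 : C)) = (1 : k)) :
    ∃ 𝔤' : C →ₗ[k] A,
      econv k φ 𝔤 𝔤' = econvUnit k ∧ econv k φ 𝔤' 𝔤 = econvUnit k := by
  clear hSA₁ hSA₂ hSC₁ hSC₂ SAinv SCinv
  obtain ⟨⟨e1, e2, e3, e4⟩, -, -⟩ := hφ
  unfold E1 at e1
  unfold E2 at e2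
  unfold E4 at e4
  set S : C →ₗ[k] C := HopfAlgebra.antipode (R := k) with hS_def
  set u : A := 𝔤 1 with hu_def
  set v : A := HopfAlgebra.antipode (R := k) u with hv_def
  set lam : C →ₗ[k] k := counit (R := k) ∘ₗ 𝔤 with hlam_def
  have hlam_apply : ∀ x : C, lam x = counit (R := k) (𝔤 x) := fun x => rfl
  -- 𝔤 x = lam x • u
  have hg : ∀ x : C, 𝔤 x = lam x • u := by
    intro x
    have h := h𝔤₁ x 1
    rw [mul_one] at h
    have h2 := congrArg (rTensor A (counit (R := k) (A := A))) h
    rw [Coalgebra.rTensor_counit_comul] at h2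
    rw [rTensor_tmul] at h2
    have h3 := congrArg (TensorProduct.lid k A) h2
    rw [hlam_apply, hu_def]
    simpa using h3
  -- lam is multiplicative
  have hgmul : ∀ x y : C, 𝔤 (x * y) = lam x • 𝔤 y := by
    intro x y
    have h2 := congrArg (rTensor A (counit (R := k) (A := A))) (h𝔤₁ x y)
    rw [Coalgebra.rTensor_counit_comul, rTensor_tmul] at h2
    have h3 := congrArg (TensorProduct.lid k A) h2
    rw [hlam_apply]
    simpa using h3
  have hlammul : ∀ x y : C, lam (x * y) = lam x * lam y := by
    intro x y
    have := congrArg (counit (R := k) (A := A)) (hgmul x y)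
    simpa [hlam_apply, smul_eq_mul] using this
  have hlam1 : lam 1 = 1 := h𝔤₂
  have hΔu : comul (R := k) u = u ⊗ₜ[k] u := by
    have h := h𝔤₁ 1 1
    rwa [mul_one] at h
  have hεu : counit (R := k) u = 1 := h𝔤₂
  have huv : u * v = 1 := by
    have h := HopfAlgebra.mul_antipode_lTensor_comul_apply (R := k) u
    rw [hΔu, lTensor_tmul, mul'_apply] at h
    rw [hv_def, h, hεu]
    simp
  have hvu : v * u = 1 := by
    have h := HopfAlgebra.mul_antipode_rTensor_comul_apply (R := k) u
    rw [hΔu, rTensor_tmul, mul'_apply] at h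
    rw [hv_def, h, hεu]
    simp
  set lamS : C →ₗ[k] k := lam ∘ₗ S with hlamS_def
  have hlamS_apply : ∀ x : C, lamS x = lam (S x) := fun x => rfl
  set mu : C ⊗[k] C →ₗ[k] k := mul' k k ∘ₗ TensorProduct.map lam lamS with hmu_def
  have hmu : ∀ x y : C, mu (x ⊗ₜ[k] y) = lam x * lamS y := by
    intro x y
    simp [hmu_def, mul'_apply]
  have hglam : mul' k A ∘ₗ lTensor A 𝔤 = LinearMap.mulRight k u ∘ₗ Nmap lam := by
    apply TensorProduct.ext'
    intro a x
    simp [hg x, mul_smul_comm, smul_mul_assoc]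
  -- mu ∘ comul = counit
  have hmuΔ : mu ∘ₗ comul (R := k) (A := C) = counit (R := k) (A := C) := by
    apply LinearMap.ext
    intro x
    obtain ⟨t, ht⟩ := TensorProduct.exists_finset (comul (R := k) x)
    have hsum : ∑ p ∈ t, p.1 * S p.2 = algebraMap k C (counit (R := k) x) := by
      have h := HopfAlgebra.mul_antipode_lTensor_comul_apply (R := k) x
      rw [ht] at h
      simp only [map_sum, lTensor_tmul, mul'_apply] at h
      rw [← h]
    have : ∑ p ∈ t, mu (p.1 ⊗ₜ[k] p.2) = counit (R := k) x := by
      calc ∑ p ∈ t, mu (p.1 ⊗ₜ[k] p.2) = ∑ p ∈ t, lam (p.1 * S p.2) := by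
            refine Finset.sum_congr rfl fun p _ => ?_
            rw [hmu, hlammul, hlamS_apply]
          _ = lam (∑ p ∈ t, p.1 * S p.2) := by rw [map_sum]
          _ = counit (R := k) x := by
            rw [hsum, Algebra.algebraMap_eq_smul_one, map_smul, hlam1, smul_eq_mul,
              mul_one]
    simp only [LinearMap.comp_apply, ht, map_sum]
    exact this
  have hPΔ : Pmap mu u ∘ₗ lTensor A (comul (R := k) (A := C)) =
      LinearMap.mulRight k u ∘ₗ (TensorProduct.rid k A).toLinearMap ∘ₗ
        lTensor A (counit (R := k) (A := C)) := by
    unfold Pmap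
    rw [LinearMap.comp_assoc, LinearMap.comp_assoc, ← LinearMap.lTensor_comp, hmuΔ]
  -- the candidate inverse
  refine ⟨Nmap lamS ∘ₗ φ ∘ₗ (TensorProduct.mk k C A).flip v, ?_, ?_⟩
  · -- 𝔤 ★ 𝔤' = unit
    apply LinearMap.ext
    intro c
    obtain ⟨s, hs⟩ := TensorProduct.exists_finset (comul (R := k) c)
    have step1 : ∀ x y : C,
        mul' k A (lTensor A 𝔤 (φ (x ⊗ₜ[k]
            (Nmap lamS ∘ₗ φ ∘ₗ (TensorProduct.mk k C A).flip v) y))) =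
          Pmap mu u ((TensorProduct.assoc k A C C)
            (rTensor C φ ((TensorProduct.assoc k C A C).symm
              (x ⊗ₜ[k] φ (y ⊗ₜ[k] v))))) := by
      intro x y
      have h1 := LinearMap.congr_fun
        (H_Nmap_aux lamS (mul' k A ∘ₗ lTensor A 𝔤 ∘ₗ φ) x) (φ (y ⊗ₜ[k] v))
      have h2 := LinearMap.congr_fun
        (Pmap_rTensor_phi φ mu lam lamS u 𝔤 hmu hglam)
        ((TensorProduct.assoc k C A C).symm (x ⊗ₜ[k] φ (y ⊗ₜ[k] v)))
      simp only [LinearMap.comp_apply, TensorProduct.mk_apply, LinearMap.flip_apply,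
        LinearEquiv.coe_coe] at h1 h2 ⊢
      rw [h1, ← h2]
    have hsum : (lTensor C φ) ((TensorProduct.assoc k C C A)
        ((rTensor A (comul (R := k) (A := C))) (c ⊗ₜ[k] v)))
        = ∑ p ∈ s, p.1 ⊗ₜ[k] φ (p.2 ⊗ₜ[k] v) := by
      rw [rTensor_tmul, hs, TensorProduct.sum_tmul, map_sum, map_sum]
      refine Finset.sum_congr rfl fun p _ => ?_
      rw [TensorProduct.assoc_tmul, lTensor_tmul]
    have he2 := LinearMap.congr_fun e2 (c ⊗ₜ[k] v)
    simp only [LinearMap.comp_apply, LinearEquiv.coe_coe] at he2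
    have hP2 := congrArg (Pmap mu u) he2
    rw [hsum, map_sum, map_sum, map_sum] at hP2
    calc (econv k φ 𝔤 (Nmap lamS ∘ₗ φ ∘ₗ (TensorProduct.mk k C A).flip v)) c
        = ∑ p ∈ s, mul' k A (lTensor A 𝔤 (φ (p.1 ⊗ₜ[k]
            (Nmap lamS ∘ₗ φ ∘ₗ (TensorProduct.mk k C A).flip v) p.2))) := by
          simp only [econv, LinearMap.comp_apply, hs, map_sum, lTensor_tmul]
      _ = ∑ p ∈ s, Pmap mu u ((TensorProduct.assoc k A C C)
            (rTensor C φ ((TensorProduct.assoc k C A C).symm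
              (p.1 ⊗ₜ[k] φ (p.2 ⊗ₜ[k] v))))) := by
          refine Finset.sum_congr rfl fun p _ => step1 p.1 p.2
      _ = Pmap mu u (lTensor A (comul (R := k) (A := C)) (φ (c ⊗ₜ[k] v))) := by
          rw [hP2, map_sum]
      _ = (econvUnit k (C := C) (A := A)) c := by
          have h3 := LinearMap.congr_fun hPΔ (φ (c ⊗ₜ[k] v))
          simp only [LinearMap.comp_apply, LinearEquiv.coe_coe] at h3
          rw [h3]
          have he4 := LinearMap.congr_fun e4 (c ⊗ₜ[k] v)
          simp only [LinearMap.comp_apply, LinearEquiv.coe_coe] at he4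
          rw [he4, rTensor_tmul, TensorProduct.lid_tmul, map_smul]
          simp only [LinearMap.mulRight_apply, smul_mul_assoc, hvu, econvUnit,
            LinearMap.comp_apply, Algebra.linearMap_apply,
            Algebra.algebraMap_eq_smul_one]
  · -- 𝔤' ★ 𝔤 = unit
    apply LinearMap.ext
    intro c
    obtain ⟨s, hs⟩ := TensorProduct.exists_finset (comul (R := k) c)
    have KL1 : ∀ x : C, Kmap φ (φ (x ⊗ₜ[k] u) ⊗ₜ[k] v) = (1 : A) ⊗ₜ[k] x := by
      intro x
      have h := LinearMap.congr_fun e1 (x ⊗ₜ[k] (u ⊗ₜ[k] v))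
      simp only [LinearMap.comp_apply, LinearEquiv.coe_coe, lTensor_tmul, mul'_apply,
        TensorProduct.assoc_symm_tmul, rTensor_tmul, huv] at h
      rw [e3 x] at h
      rw [Kmap]
      simp only [LinearMap.comp_apply, LinearEquiv.coe_coe]
      exact h.symm
    have step1 : ∀ x y : C,
        mul' k A (lTensor A (Nmap lamS ∘ₗ φ ∘ₗ (TensorProduct.mk k C A).flip v)
          (φ (x ⊗ₜ[k] 𝔤 y))) = (lamS x * lam y) • (1 : A) := by
      intro x y
      rw [hg y, TensorProduct.tmul_smul, map_smul, map_smul, map_smul]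
      have h1 := LinearMap.congr_fun (mul_lTensor_g' φ lamS v) (φ (x ⊗ₜ[k] u))
      simp only [LinearMap.comp_apply, TensorProduct.mk_apply,
        LinearMap.flip_apply] at h1
      rw [h1, KL1 x, Nmap_tmul, smul_smul, mul_comm]
    have hsum : ∑ p ∈ s, S p.1 * p.2 = algebraMap k C (counit (R := k) c) := by
      have h := HopfAlgebra.mul_antipode_rTensor_comul_apply (R := k) c
      rw [hs] at h
      simp only [map_sum, rTensor_tmul, mul'_apply] at h
      rw [← h]
    calc (econv k φ (Nmap lamS ∘ₗ φ ∘ₗ (TensorProduct.mk k C A).flip v) 𝔤) c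
        = ∑ p ∈ s, mul' k A (lTensor A
            (Nmap lamS ∘ₗ φ ∘ₗ (TensorProduct.mk k C A).flip v)
            (φ (p.1 ⊗ₜ[k] 𝔤 p.2))) := by
          simp only [econv, LinearMap.comp_apply, hs, map_sum, lTensor_tmul]
      _ = ∑ p ∈ s, (lamS p.1 * lam p.2) • (1 : A) := by
          refine Finset.sum_congr rfl fun p _ => step1 p.1 p.2
      _ = (∑ p ∈ s, lam (S p.1 * p.2)) • (1 : A) := by
          rw [Finset.sum_smul]
          refine Finset.sum_congr rfl fun p _ => ?_
          rw [hlammul, hlamS_apply]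
      _ = (econvUnit k (C := C) (A := A)) c := by
          rw [← map_sum, hsum, Algebra.algebraMap_eq_smul_one, map_smul, hlam1]
          simp [econvUnit, Algebra.algebraMap_eq_smul_one]

end Paper
end
end

section
/- Let (C, A, φ, 𝔤) be a pivotal entwined datum over k, with C and A finite-dimensional Hopf algebras with bijective antipodes. Assume additionally that Σ a_φ ⊗ (1_C)^φ = a ⊗ 1_C for all a ∈ A. Then κ := 𝔤(1_C) is a pivot of A, i.e. Δ_A(κ) = κ ⊗ κ, ε_A(κ) = 1, and κ S_A(a) = S_A^{-1}(a) κ for all a ∈ A. -/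
open TensorProduct LinearMap Coalgebra

noncomputable section

namespace Paper

section Pivotal

variable (k : Type*) [Field k]
variable (C A : Type*) [Ring C] [Ring A] [HopfAlgebra k C] [HopfAlgebra k A]

/-- `𝔤 : C → A` is an entwined pivotal morphism over `(C, A, φ)`: Eqs. (4.1)-(4.4). -/
def IsPivotalMorphism (SCinv : C →ₗ[k] C) (φ : C ⊗[k] A →ₗ[k] A ⊗[k] C)
    (𝔤 : C →ₗ[k] A) : Prop :=
  -- (4.1) `Δ_A(𝔤(cd)) = 𝔤(c) ⊗ 𝔤(d)`
  (∀ c d : C, comul (R := k) (𝔤 (c * d)) = 𝔤 c ⊗ₜ[k] 𝔤 d) ∧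
  -- (4.2) `ε_A(𝔤(1_C)) = 1`
  (counit (R := k) (𝔤 (1 : C)) = (1 : k)) ∧
  -- (4.3) `𝔤(c) S_A²(a) = Σ a_φ 𝔤(c^φ)`
  (∀ (a : A) (c : C),
    𝔤 c * HopfAlgebra.antipode (R := k) (HopfAlgebra.antipode (R := k) a) =
      mul' k A (lTensor A 𝔤 (φ (c ⊗ₜ[k] a)))) ∧
  -- (4.4) `𝔤(c₁) ⊗ c₂ = Σ 𝔤(c₂)_φ ⊗ S_C⁻²(c₁^φ)`
  (∀ c : C,
    rTensor C 𝔤 (comul (R := k) c) =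
      lTensor A (SCinv ∘ₗ SCinv) (φ (lTensor C 𝔤 (comul (R := k) c))))

end Pivotal

end Paper

namespace Paper

/-- If `(C, A, φ, 𝔤)` is a pivotal entwined datum with
`Σ a_φ ⊗ (1_C)^φ = a ⊗ 1_C`, then `κ := 𝔤(1_C)` is a pivot of `A`. -/
theorem pivot_of_pivotal_entwined_datum
    {k : Type*} [Field k] [CharZero k]
    {C A : Type*} [Ring C] [Ring A] [HopfAlgebra k C] [HopfAlgebra k A]
    [FiniteDimensional k C] [FiniteDimensional k A]
    (SAinv : A →ₗ[k] A)
    (hSA₁ : SAinv ∘ₗ HopfAlgebra.antipode (R := k) = LinearMap.id)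
    (hSA₂ : HopfAlgebra.antipode (R := k) ∘ₗ SAinv = LinearMap.id)
    (SCinv : C →ₗ[k] C)
    (hSC₁ : SCinv ∘ₗ HopfAlgebra.antipode (R := k) = LinearMap.id)
    (hSC₂ : HopfAlgebra.antipode (R := k) ∘ₗ SCinv = LinearMap.id)
    (φ : C ⊗[k] A →ₗ[k] A ⊗[k] C) (hφ : IsMonoidalEntwining k C A φ)
    (𝔤 : C →ₗ[k] A) (h𝔤 : IsPivotalMorphism k C A SCinv φ 𝔤)
    -- the additional assumption `Σ a_φ ⊗ (1_C)^φ = a ⊗ 1_C`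
    (h1 : ∀ a : A, φ ((1 : C) ⊗ₜ[k] a) = a ⊗ₜ[k] (1 : C)) :
    -- `κ := 𝔤(1_C)` is a pivot of `A`
    comul (R := k) (𝔤 (1 : C)) = 𝔤 (1 : C) ⊗ₜ[k] 𝔤 (1 : C) ∧
    counit (R := k) (𝔤 (1 : C)) = (1 : k) ∧
    (∀ a : A, 𝔤 (1 : C) * HopfAlgebra.antipode (R := k) a = SAinv a * 𝔤 (1 : C)) := by
  obtain ⟨h41, h42, h43, h44⟩ := h𝔤
  refine ⟨by simpa using h41 1 1, h42, ?_⟩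
  intro a
  -- key: 𝔤(1) S²(b) = b 𝔤(1) for all b, from (4.3) with c = 1 and h1
  have key : ∀ b : A,
      𝔤 (1 : C) * HopfAlgebra.antipode (R := k) (HopfAlgebra.antipode (R := k) b)
        = b * 𝔤 (1 : C) := by
    intro b
    have := h43 b 1
    rw [h1 b] at this
    simpa [mul'] using this
  have hinv : HopfAlgebra.antipode (R := k) (SAinv a) = a :=
    congrFun (congrArg (fun f => f.toFun) hSA₂) a
  have := key (SAinv a)
  rwa [hinv] at this

end Paper
end
end

section
/- Let (C, A, φ, 𝔤) be a pivotal entwined datum over k, with C and A finite-dimensional Hopf algebras with bijective antipodes. Assume additionally that Σ ε_A(a_φ) c^φ = ε_A(a) c for all a ∈ A, c ∈ C. Then ϱ := ε_A ∘ 𝔤 is a copivot on C, i.e. ϱ(cd) = ϱ(c)ϱ(d), ϱ(1_C) = 1, and Σ ϱ(c₁) S_C(c₂) = Σ S_C^{-1}(c₁) ϱ(c₂) for all c, d ∈ C. -/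
open TensorProduct LinearMap Coalgebra

noncomputable section

namespace Paper

/-- If `(C, A, φ, 𝔤)` is a pivotal entwined datum with
`Σ ε_A(a_φ) c^φ = ε_A(a) c`, then `ϱ := ε_A ∘ 𝔤` is a copivot on `C`. -/
theorem copivot_of_pivotal_entwined_datum
    {k : Type*} [Field k] [CharZero k]
    {C A : Type*} [Ring C] [Ring A] [HopfAlgebra k C] [HopfAlgebra k A]
    [FiniteDimensional k C] [FiniteDimensional k A]
    (SAinv : A →ₗ[k] A)
    (hSA₁ : SAinv ∘ₗ HopfAlgebra.antipode (R := k) = LinearMap.id)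
    (hSA₂ : HopfAlgebra.antipode (R := k) ∘ₗ SAinv = LinearMap.id)
    (SCinv : C →ₗ[k] C)
    (hSC₁ : SCinv ∘ₗ HopfAlgebra.antipode (R := k) = LinearMap.id)
    (hSC₂ : HopfAlgebra.antipode (R := k) ∘ₗ SCinv = LinearMap.id)
    (φ : C ⊗[k] A →ₗ[k] A ⊗[k] C) (hφ : IsMonoidalEntwining k C A φ)
    (𝔤 : C →ₗ[k] A) (h𝔤 : IsPivotalMorphism k C A SCinv φ 𝔤)
    -- the additional assumption `Σ ε_A(a_φ) c^φ = ε_A(a) c`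
    (h1 : ∀ (a : A) (c : C),
      (TensorProduct.lid k C) (rTensor C (counit (R := k) (A := A)) (φ (c ⊗ₜ[k] a)))
        = counit (R := k) (A := A) a • c) :
    -- `ϱ := ε_A ∘ 𝔤` is a copivot on `C`
    (∀ c d : C,
      (counit (R := k) ∘ₗ 𝔤) (c * d) = (counit (R := k) ∘ₗ 𝔤) c * (counit (R := k) ∘ₗ 𝔤) d) ∧
    ((counit (R := k) ∘ₗ 𝔤) (1 : C) = (1 : k)) ∧
    -- `Σ ϱ(c₁) S_C(c₂) = Σ S_C⁻¹(c₁) ϱ(c₂)`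
    (∀ c : C,
      (TensorProduct.lid k C)
          (TensorProduct.map (counit (R := k) ∘ₗ 𝔤) (HopfAlgebra.antipode (R := k))
            (comul (R := k) c)) =
        (TensorProduct.rid k C)
          (TensorProduct.map SCinv (counit (R := k) ∘ₗ 𝔤) (comul (R := k) c))) := by
  obtain ⟨h41, h42, h43, h44⟩ := h𝔤
  have hSCinv : ∀ x : C, HopfAlgebra.antipode (R := k) (SCinv x) = x := by
    intro x
    have := congrArg (fun f : C →ₗ[k] C => f x) hSC₂
    simpa using this
  set ϱ : C →ₗ[k] k := counit (R := k) ∘ₗ 𝔤 with hϱ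
  refine ⟨?_, ?_, ?_⟩
  · intro c d
    have h := congrArg (fun t : A ⊗[k] A =>
      counit (R := k) ((TensorProduct.lid k A)
        (rTensor A (counit (R := k) (A := A)) t))) (h41 c d)
    simpa [hϱ, Coalgebra.rTensor_counit_comul, TensorProduct.smul_tmul',
      mul_comm] using h
  · simpa [hϱ] using h42
  · intro c
    -- naturality / pointwise lemmas
    have nat2 : ∀ z : C ⊗[k] C,
        (TensorProduct.lid k C) (rTensor C (counit (R := k) (A := A)) (rTensor C 𝔤 z))
          = (TensorProduct.lid k C) (rTensor C ϱ z) := by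
      intro z
      induction z using TensorProduct.induction_on with
      | zero => simp
      | tmul x y => simp [hϱ]
      | add x y hx hy => simp [map_add, hx, hy]
    have nat1 : ∀ y : A ⊗[k] C,
        (TensorProduct.lid k C) (rTensor C (counit (R := k) (A := A))
            (lTensor A (SCinv ∘ₗ SCinv) y))
          = SCinv (SCinv ((TensorProduct.lid k C)
              (rTensor C (counit (R := k) (A := A)) y))) := by
      intro y
      induction y using TensorProduct.induction_on with
      | zero => simp
      | tmul x y => simp [TensorProduct.smul_tmul']
      | add x y hx hy => simp [map_add, hx, hy]
    have h1' : ∀ z : C ⊗[k] C,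
        (TensorProduct.lid k C) (rTensor C (counit (R := k) (A := A))
            (φ (lTensor C 𝔤 z)))
          = (TensorProduct.rid k C) (lTensor C ϱ z) := by
      intro z
      induction z using TensorProduct.induction_on with
      | zero => simp
      | tmul x y => simp [h1 (𝔤 y) x, hϱ, TensorProduct.smul_tmul']
      | add x y hx hy => simp [map_add, hx, hy]
    have key :
        (TensorProduct.lid k C) (rTensor C ϱ (comul (R := k) c))
          = SCinv (SCinv ((TensorProduct.rid k C)
              (lTensor C ϱ (comul (R := k) c)))) := by
      have h := congrArg (fun t : A ⊗[k] C =>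
        (TensorProduct.lid k C) (rTensor C (counit (R := k) (A := A)) t)) (h44 c)
      rw [nat2, nat1, h1'] at h
      exact h
    have nat3 : ∀ z : C ⊗[k] C,
        HopfAlgebra.antipode (R := k) ((TensorProduct.lid k C) (rTensor C ϱ z))
          = (TensorProduct.lid k C)
              (TensorProduct.map ϱ (HopfAlgebra.antipode (R := k)) z) := by
      intro z
      induction z using TensorProduct.induction_on with
      | zero => simp
      | tmul x y => simp
      | add x y hx hy => simp [map_add, hx, hy]
    have nat4 : ∀ z : C ⊗[k] C,
        SCinv ((TensorProduct.rid k C) (lTensor C ϱ z))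
          = (TensorProduct.rid k C) (TensorProduct.map SCinv ϱ z) := by
      intro z
      induction z using TensorProduct.induction_on with
      | zero => simp
      | tmul x y => simp
      | add x y hx hy => simp [map_add, hx, hy]
    calc (TensorProduct.lid k C)
          (TensorProduct.map ϱ (HopfAlgebra.antipode (R := k)) (comul (R := k) c))
        = HopfAlgebra.antipode (R := k)
            ((TensorProduct.lid k C) (rTensor C ϱ (comul (R := k) c))) :=
          (nat3 _).symm
      _ = HopfAlgebra.antipode (R := k) (SCinv (SCinv ((TensorProduct.rid k C)
            (lTensor C ϱ (comul (R := k) c))))) := by rw [key]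
      _ = SCinv ((TensorProduct.rid k C) (lTensor C ϱ (comul (R := k) c))) :=
          hSCinv _
      _ = (TensorProduct.rid k C)
            (TensorProduct.map SCinv ϱ (comul (R := k) c)) := nat4 _


end Paper
end
end

section
/- Let H be a finite-dimensional Hopf algebra over k with bijective antipode S, and let ϱ: H → k be a copivot, i.e. ϱ(ab) = ϱ(a)ϱ(b), ϱ(1_H) = 1, and Σ ϱ(h₁) S(h₂) = Σ S^{-1}(h₁) ϱ(h₂) for all h ∈ H. Then the k-linear map 𝔤': H → H, 𝔤'(x) = ϱ(x) 1_H, is an entwined pivotal morphism for the Yetter–Drinfeld entwining φ̈(c ⊗ a) = Σ a₂ ⊗ S(a₁) c a₃; explicitly, for all a, b ∈ H: (YP1) Δ(𝔤'(ab)) = 𝔤'(a) ⊗ 𝔤'(b); (YP2) ε(𝔤'(1_H)) = 1; (YP3) 𝔤'(b) S²(a) = Σ a₂ 𝔤'(S(a₁) b a₃); (YP4) 𝔤'(a₁) ⊗ S²(a₂) = 𝔤'(a₂) ⊗ S(𝔤'(1_H)) a₁ 𝔤'(1_H). -/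
open TensorProduct LinearMap Coalgebra

noncomputable section

namespace Paper

section YD

variable (k : Type*) [Field k]
variable (H : Type*) [Ring H] [HopfAlgebra k H]

/-- The iterated comultiplication `a ↦ a₁ ⊗ (a₂ ⊗ a₃)`. -/
def comul2 : H →ₗ[k] H ⊗[k] (H ⊗[k] H) :=
  lTensor H (comul (R := k) (A := H)) ∘ₗ comul (R := k) (A := H)

/-- The Yetter–Drinfeld entwining map `φ̈(c ⊗ a) = Σ a₂ ⊗ S(a₁) c a₃`. -/
def phiYD : H ⊗[k] H →ₗ[k] H ⊗[k] H :=
  lTensor H (mul' k H) ∘ₗ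
  (TensorProduct.assoc k H H H).toLinearMap ∘ₗ
  rTensor H (TensorProduct.comm k H H).toLinearMap ∘ₗ
  (TensorProduct.assoc k H H H).symm.toLinearMap ∘ₗ
  lTensor H (lTensor H (mul' k H)) ∘ₗ
  lTensor H (TensorProduct.leftComm k H H H).toLinearMap ∘ₗ
  (TensorProduct.leftComm k H H (H ⊗[k] H)).toLinearMap ∘ₗ
  lTensor H (rTensor (H ⊗[k] H) (HopfAlgebra.antipode (R := k))) ∘ₗ
  lTensor H (comul2 k H)

/-- `x ⊗ (y ⊗ z) ↦ y x z` (used for `m₁ ⊗ (S(h₁) ⊗ h₃) ↦ S(h₁) m₁ h₃`). -/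
def mulThree : H ⊗[k] (H ⊗[k] H) →ₗ[k] H :=
  mul' k H ∘ₗ lTensor H (mul' k H) ∘ₗ (TensorProduct.leftComm k H H H).toLinearMap

end YD

end Paper

namespace Paper

/-- If `ϱ : H → k` is a copivot on a finite-dimensional Hopf
algebra `H` with bijective antipode, then `𝔤'(x) = ϱ(x) 1_H` is an entwined
pivotal morphism for the Yetter–Drinfeld entwining `φ̈`, i.e. (YP1)–(YP4) hold. -/
theorem copivot_gives_yd_pivotal_morphism
    {k : Type*} [Field k] [CharZero k]
    {H : Type*} [Ring H] [HopfAlgebra k H] [FiniteDimensional k H]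
    (Sinv : H →ₗ[k] H)
    (hS₁ : Sinv ∘ₗ HopfAlgebra.antipode (R := k) = LinearMap.id)
    (hS₂ : HopfAlgebra.antipode (R := k) ∘ₗ Sinv = LinearMap.id)
    (ϱ : H →ₗ[k] k)
    (hϱ₁ : ∀ a b : H, ϱ (a * b) = ϱ a * ϱ b) (hϱ₂ : ϱ (1 : H) = (1 : k))
    (hϱ₃ : ∀ h : H,
      (TensorProduct.lid k H)
          (TensorProduct.map ϱ (HopfAlgebra.antipode (R := k)) (comul (R := k) h)) =
        (TensorProduct.rid k H)
          (TensorProduct.map Sinv ϱ (comul (R := k) h))) :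
    -- `𝔤' := ϱ(·) 1_H`
    ∀ 𝔤' : H →ₗ[k] H, 𝔤' = ϱ.smulRight (1 : H) →
    -- (YP1) `Δ(𝔤'(ab)) = 𝔤'(a) ⊗ 𝔤'(b)`
    (∀ a b : H, comul (R := k) (𝔤' (a * b)) = 𝔤' a ⊗ₜ[k] 𝔤' b) ∧
    -- (YP2) `ε(𝔤'(1)) = 1`
    (counit (R := k) (𝔤' (1 : H)) = (1 : k)) ∧
    -- (YP3) `𝔤'(b) S²(a) = Σ a₂ 𝔤'(S(a₁) b a₃)`
    (∀ a b : H,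
      𝔤' b * HopfAlgebra.antipode (R := k) (HopfAlgebra.antipode (R := k) a) =
        mul' k H ((lTensor H (𝔤' ∘ₗ mul' k H))
          ((TensorProduct.leftComm k H H H)
            ((rTensor (H ⊗[k] H)
              (LinearMap.mulRight k b ∘ₗ HopfAlgebra.antipode (R := k)))
              (comul2 k H a))))) ∧
    -- (YP4) `𝔤'(a₁) ⊗ S²(a₂) = 𝔤'(a₂) ⊗ S(𝔤'(1)) a₁ 𝔤'(1)`
    (∀ a : H,
      TensorProduct.map 𝔤'
          (HopfAlgebra.antipode (R := k) ∘ₗ HopfAlgebra.antipode (R := k))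
          (comul (R := k) a) =
        (TensorProduct.comm k H H)
          (TensorProduct.map
            (LinearMap.mulLeft k (HopfAlgebra.antipode (R := k) (𝔤' (1 : H))) ∘ₗ
              LinearMap.mulRight k (𝔤' (1 : H))) 𝔤'
            (comul (R := k) a))) := by
  intro 𝔤' h𝔤
  subst h𝔤
  have hSinv : ∀ x : H, HopfAlgebra.antipode (R := k) (A := H) (Sinv x) = x :=
    fun x => LinearMap.congr_fun hS₂ x
  have hϱalg : ∀ c : k, ϱ (algebraMap k H c) = c := by
    intro c
    rw [Algebra.algebraMap_eq_smul_one, map_smul, hϱ₂, smul_eq_mul, mul_one]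
  -- The key consequence of the copivot property:
  -- `Σ ϱ(h₁) • S²(h₂) = Σ ϱ(h₂) • h₁`.
  have star : ∀ (h : H) (r : Coalgebra.Repr k h (H × H)),
      ∑ i ∈ r.index, ϱ (r.left i) •
          HopfAlgebra.antipode (R := k) (HopfAlgebra.antipode (R := k) (r.right i)) =
        ∑ i ∈ r.index, ϱ (r.right i) • r.left i := by
    intro h r
    have h1 := hϱ₃ h
    rw [← r.eq] at h1
    simp only [map_sum, TensorProduct.map_tmul, TensorProduct.lid_tmul,
      TensorProduct.rid_tmul] at h1
    have h2 := congrArg (HopfAlgebra.antipode (R := k) (A := H)) h1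
    simpa only [map_sum, map_smul, hSinv] using h2
  refine ⟨?_, ?_, ?_, ?_⟩
  · -- (YP1)
    intro a b
    simp only [LinearMap.smulRight_apply, map_smul, Bialgebra.comul_one, hϱ₁,
      Algebra.TensorProduct.one_def, TensorProduct.smul_tmul', TensorProduct.tmul_smul,
      smul_smul]
    rw [mul_comm (ϱ a) (ϱ b)]
  · -- (YP2)
    simp only [LinearMap.smulRight_apply, map_smul, Bialgebra.counit_one, hϱ₂,
      smul_eq_mul, mul_one]
  · -- (YP3)
    intro a b
    let r : Coalgebra.Repr k a (H × H) := Coalgebra.Repr.arbitrary k a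
    let r1 : ∀ i : H × H, Coalgebra.Repr k (r.left i) (H × H) :=
      fun i => Coalgebra.Repr.arbitrary k (r.left i)
    let r2 : ∀ i : H × H, Coalgebra.Repr k (r.right i) (H × H) :=
      fun i => Coalgebra.Repr.arbitrary k (r.right i)
    have counit_eq : ∑ i ∈ r.index, counit (R := k) (r.left i) • r.right i = a := by
      have h0 := congrArg (TensorProduct.lid k H) (Coalgebra.sum_counit_tmul_eq (R := k) r)
      simpa only [map_sum, TensorProduct.lid_tmul, one_smul] using h0
    -- the coassociativity step
    have coassoc_key :
        ∑ i ∈ r.index, ∑ j ∈ (r2 i).index,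
          (ϱ (HopfAlgebra.antipode (R := k) (r.left i)) * ϱ ((r2 i).left j)) •
            HopfAlgebra.antipode (R := k) (HopfAlgebra.antipode (R := k) ((r2 i).right j)) =
        HopfAlgebra.antipode (R := k) (HopfAlgebra.antipode (R := k) a) := by
      have h3 := Coalgebra.sum_tmul_tmul_eq (R := k) r r1 r2
      have h4 := congrArg
        ((TensorProduct.lid k H).toLinearMap ∘ₗ
          TensorProduct.map
            (ϱ ∘ₗ mul' k H ∘ₗ
              LinearMap.rTensor H (HopfAlgebra.antipode (R := k) (A := H)))
            (HopfAlgebra.antipode (R := k) (A := H) ∘ₗ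
              HopfAlgebra.antipode (R := k) (A := H)) ∘ₗ
          (TensorProduct.assoc k H H H).symm.toLinearMap) h3
      simp only [map_sum, LinearMap.comp_apply, LinearEquiv.coe_coe,
        TensorProduct.assoc_symm_tmul, TensorProduct.map_tmul, TensorProduct.lid_tmul,
        LinearMap.rTensor_tmul, LinearMap.mul'_apply, hϱ₁] at h4
      rw [← h4]
      calc ∑ i ∈ r.index, ∑ j ∈ (r1 i).index,
            (ϱ (HopfAlgebra.antipode (R := k) ((r1 i).left j)) * ϱ ((r1 i).right j)) •
              HopfAlgebra.antipode (R := k) (HopfAlgebra.antipode (R := k) (r.right i))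
          = ∑ i ∈ r.index, counit (R := k) (r.left i) •
              HopfAlgebra.antipode (R := k) (HopfAlgebra.antipode (R := k) (r.right i)) := by
            refine Finset.sum_congr rfl fun i _ => ?_
            simp only [← hϱ₁]
            rw [← Finset.sum_smul, ← map_sum, HopfAlgebra.sum_antipode_mul_eq_algebraMap_counit (r1 i), hϱalg]
        _ = HopfAlgebra.antipode (R := k) (HopfAlgebra.antipode (R := k)
              (∑ i ∈ r.index, counit (R := k) (r.left i) • r.right i)) := by
            simp only [map_sum, map_smul]
        _ = HopfAlgebra.antipode (R := k) (HopfAlgebra.antipode (R := k) a) := by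
            rw [counit_eq]
    -- compute the right-hand side as an explicit double sum
    have hRHS : mul' k H ((lTensor H ((ϱ.smulRight (1 : H)) ∘ₗ mul' k H))
        ((TensorProduct.leftComm k H H H)
          ((rTensor (H ⊗[k] H)
            (LinearMap.mulRight k b ∘ₗ HopfAlgebra.antipode (R := k)))
            (comul2 k H a)))) =
        ∑ i ∈ r.index, ∑ j ∈ (r2 i).index,
          (ϱ (HopfAlgebra.antipode (R := k) (r.left i)) * ϱ b * ϱ ((r2 i).right j)) •
            (r2 i).left j := by
      rw [comul2, LinearMap.comp_apply, ← r.eq]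
      simp only [map_sum, LinearMap.lTensor_tmul]
      rw [Finset.sum_congr rfl (fun i _ => by rw [← (r2 i).eq])]
      simp only [TensorProduct.tmul_sum, map_sum, LinearMap.rTensor_tmul,
        LinearMap.lTensor_tmul, LinearMap.comp_apply, TensorProduct.leftComm_tmul,
        LinearMap.mulRight_apply, LinearMap.mul'_apply, LinearMap.smulRight_apply,
        hϱ₁, mul_smul_comm, mul_one, smul_smul]
    rw [LinearMap.smulRight_apply, smul_mul_assoc, one_mul, hRHS]
    symm
    calc ∑ i ∈ r.index, ∑ j ∈ (r2 i).index,
          (ϱ (HopfAlgebra.antipode (R := k) (r.left i)) * ϱ b * ϱ ((r2 i).right j)) •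
            (r2 i).left j
        = ∑ i ∈ r.index, (ϱ (HopfAlgebra.antipode (R := k) (r.left i)) * ϱ b) •
            ∑ j ∈ (r2 i).index, ϱ ((r2 i).right j) • (r2 i).left j := by
          refine Finset.sum_congr rfl fun i _ => ?_
          rw [Finset.smul_sum]
          exact Finset.sum_congr rfl fun j _ => by rw [smul_smul]
      _ = ∑ i ∈ r.index, (ϱ (HopfAlgebra.antipode (R := k) (r.left i)) * ϱ b) •
            ∑ j ∈ (r2 i).index, ϱ ((r2 i).left j) •
              HopfAlgebra.antipode (R := k)
                (HopfAlgebra.antipode (R := k) ((r2 i).right j)) := by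
          exact Finset.sum_congr rfl fun i _ => by rw [star _ (r2 i)]
      _ = ϱ b • ∑ i ∈ r.index, ∑ j ∈ (r2 i).index,
            (ϱ (HopfAlgebra.antipode (R := k) (r.left i)) * ϱ ((r2 i).left j)) •
              HopfAlgebra.antipode (R := k)
                (HopfAlgebra.antipode (R := k) ((r2 i).right j)) := by
          rw [Finset.smul_sum]
          refine Finset.sum_congr rfl fun i _ => ?_
          rw [Finset.smul_sum, Finset.smul_sum]
          refine Finset.sum_congr rfl fun j _ => ?_
          rw [smul_smul, smul_smul]
          congr 1
          ring
      _ = ϱ b • HopfAlgebra.antipode (R := k) (HopfAlgebra.antipode (R := k) a) := by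
          rw [coassoc_key]
  · -- (YP4)
    intro a
    let r : Coalgebra.Repr k a (H × H) := Coalgebra.Repr.arbitrary k a
    have h1 : (ϱ.smulRight (1 : H)) 1 = 1 := by
      simp [hϱ₂]
    have hS1 : HopfAlgebra.antipode (R := k) (A := H) (1 : H) = 1 := by
      have h0 := HopfAlgebra.mul_antipode_rTensor_comul_apply (R := k) (A := H) 1
      simpa [Algebra.TensorProduct.one_def] using h0
    rw [← r.eq]
    simp only [map_sum, TensorProduct.map_tmul, LinearMap.comp_apply, h1, hS1,
      LinearMap.mulLeft_apply, LinearMap.mulRight_apply, one_mul, mul_one,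
      TensorProduct.comm_tmul, LinearMap.smulRight_apply]
    have hsm : ∀ (c : k) (z : H), (c • (1 : H)) ⊗ₜ[k] z = (1 : H) ⊗ₜ[k] (c • z) :=
      fun c z => TensorProduct.smul_tmul c 1 z
    rw [Finset.sum_congr rfl fun i _ => hsm _ _, Finset.sum_congr rfl fun i _ => hsm _ _,
      ← TensorProduct.tmul_sum, ← TensorProduct.tmul_sum, star a r]

end Paper
end
end
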